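/- arXiv:2401.08476 — 12 statements merged into one kernel-verified Lean document; each statement's English description precedes it below -/
import Mathlib

section
/- Suppose W : [0,∞) → ℝ satisfies, for every x ≥ 0, the fixed-point equation W(x) = sup_{y ≥ x} [−C(y) + p(y)·R + α·(1 − p(y))·(W(y) + C(y))], and that for every x ≥ 0 this supremum is attained at some point ȳ_x ≥ x. Then for every x ≥ 0: (i) W(x) = sup_{y ≥ x} G(y); and (ii) G(ȳ_x) = sup_{y ≥ x} G(y), i.e., the set of maximizers of G over [x,∞) is nonempty and contains ȳ_x. -/
/-!
Write `F y` for the Bellman payoff and `D y = 1 - α + α p y ∈ (0, 1]`. Then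
`F y = (1 - D y) W y + D y G y`, so `F y ≤ W y` forces `G y ≤ W y`; being a supremum over
tails, `W` is antitone, hence `G ≤ W x` on `[x, ∞)`. At the maximiser `ȳ = ȳ x`,
`W x = (1 - D ȳ) W ȳ + D ȳ G ȳ ≤ (1 - D ȳ) W x + D ȳ G ȳ`, whence `W x ≤ G ȳ`.
-/

open Set

lemma le_of_mix_le {d w g : ℝ} (hd : 0 < d) (h : (1 - d) * w + d * g ≤ w) : g ≤ w := by
  nlinarith

lemma le_of_le_mix {d v w g : ℝ} (hd0 : 0 < d) (hd1 : d ≤ 1) (hwv : w ≤ v)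
    (h : v = (1 - d) * w + d * g) : v ≤ g := by
  nlinarith

lemma sSup_image_Ici_anti {f : ℝ → ℝ} {a b : ℝ} (hbdd : BddAbove (f '' Ici a)) (hab : a ≤ b) :
    sSup (f '' Ici b) ≤ sSup (f '' Ici a) :=
  csSup_le_csSup hbdd (nonempty_Ici.image f) (image_mono (Ici_subset_Ici.mpr hab))

section RelaxedFixedPoint

variable {F G W D : ℝ → ℝ}

lemma le_of_eq_sSup_image_Ici (hbdd : ∀ x, 0 ≤ x → BddAbove (F '' Ici x))
    (hW : ∀ x, 0 ≤ x → W x = sSup (F '' Ici x)) {y : ℝ} (hy : 0 ≤ y) : F y ≤ W y :=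
  (hW y hy).symm ▸ le_csSup (hbdd y hy) (mem_image_of_mem F self_mem_Ici)

lemma antitoneOn_of_eq_sSup_image_Ici (hbdd : ∀ x, 0 ≤ x → BddAbove (F '' Ici x))
    (hW : ∀ x, 0 ≤ x → W x = sSup (F '' Ici x)) : AntitoneOn W (Ici 0) := by
  intro a ha b hb hab
  rw [hW a ha, hW b hb]
  exact sSup_image_Ici_anti (hbdd a ha) hab

theorem isGreatest_image_Ici_of_eq_sSup_mix
    (hD0 : ∀ y, 0 ≤ y → 0 < D y) (hD1 : ∀ y, 0 ≤ y → D y ≤ 1)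
    (hmix : ∀ y, 0 ≤ y → F y = (1 - D y) * W y + D y * G y)
    (hbdd : ∀ x, 0 ≤ x → BddAbove (F '' Ici x))
    (hW : ∀ x, 0 ≤ x → W x = sSup (F '' Ici x))
    {x y : ℝ} (hx : 0 ≤ x) (hxy : x ≤ y) (hatt : W x = F y) :
    IsGreatest (G '' Ici x) (W x) ∧ G y = W x := by
  have hanti := antitoneOn_of_eq_sSup_image_Ici hbdd hW
  have hG_le_W : ∀ z, 0 ≤ z → G z ≤ W z := fun z hz =>
    le_of_mix_le (hD0 z hz) ((hmix z hz).symm ▸ le_of_eq_sSup_image_Ici hbdd hW hz)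
  have hG_le : ∀ z, x ≤ z → G z ≤ W x := fun z hxz =>
    (hG_le_W z (hx.trans hxz)).trans (hanti hx (hx.trans hxz) hxz)
  have hy : 0 ≤ y := hx.trans hxy
  have hW_le : W x ≤ G y :=
    le_of_le_mix (hD0 y hy) (hD1 y hy) (hanti hx hy hxy) (hatt.trans (hmix y hy))
  have hGy : G y = W x := (hG_le y hxy).antisymm hW_le
  exact ⟨⟨⟨y, hxy, hGy⟩, forall_mem_image.mpr fun z hz => hG_le z hz⟩, hGy⟩

end RelaxedFixedPoint

lemma bellman_payoff_eq_mix {α p R c w : ℝ} (hD : 1 - α + α * p ≠ 0) :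
    -c + p * R + α * (1 - p) * (w + c)
      = (1 - (1 - α + α * p)) * w + (1 - α + α * p) * (-c + p * R / (1 - α + α * p)) := by
  rw [mul_add _ (-c), mul_div_cancel₀ _ hD]
  ring

theorem W_eq_sup_G_general
    (α R : ℝ) (hα0 : 0 < α) (hα1 : α < 1)
    (C p W : ℝ → ℝ) (ybar : ℝ → ℝ)
    (hp0 : ∀ x, 0 ≤ x → 0 ≤ p x) (hp1 : ∀ x, 0 ≤ x → p x ≤ 1)
    (hbdd : ∀ x, 0 ≤ x →
      BddAbove ((fun y => -C y + p y * R + α * (1 - p y) * (W y + C y)) '' {y | x ≤ y}))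
    (hW : ∀ x, 0 ≤ x →
      W x = sSup ((fun y => -C y + p y * R + α * (1 - p y) * (W y + C y)) '' {y | x ≤ y}))
    (hybar_mem : ∀ x, 0 ≤ x → x ≤ ybar x)
    (hybar_att : ∀ x, 0 ≤ x →
      W x = -C (ybar x) + p (ybar x) * R + α * (1 - p (ybar x)) * (W (ybar x) + C (ybar x))) :
    ∀ x, 0 ≤ x →
      W x = sSup ((fun y => -C y + p y * R / (1 - α + α * p y)) '' {y | x ≤ y}) ∧
      (-C (ybar x) + p (ybar x) * R / (1 - α + α * p (ybar x)))
        = sSup ((fun y => -C y + p y * R / (1 - α + α * p y)) '' {y | x ≤ y}) := by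
  intro x hx
  have hD0 : ∀ y, 0 ≤ y → 0 < 1 - α + α * p y := fun y hy => by
    nlinarith [mul_nonneg hα0.le (hp0 y hy)]
  have hD1 : ∀ y, 0 ≤ y → 1 - α + α * p y ≤ 1 := fun y hy => by
    nlinarith [mul_nonneg hα0.le (sub_nonneg.mpr (hp1 y hy))]
  obtain ⟨hgreatest, hGybar⟩ := isGreatest_image_Ici_of_eq_sSup_mix hD0 hD1
    (fun y hy => bellman_payoff_eq_mix (hD0 y hy).ne') hbdd hW hx (hybar_mem x hx) (hybar_att x hx)
  exact ⟨hgreatest.csSup_eq.symm, hGybar.trans hgreatest.csSup_eq.symm⟩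

/-- Let `α ∈ (0,1)`, `R > 0`, `C` the cost function, `p` the test
function with values in `[0,1]` on `[0,∞)`, and define
`G y := −C y + p y • R / (1 − α + α p y)`.
Suppose `W` satisfies the fixed-point equation
`W x = sup_{y ≥ x} [−C y + p y • R + α (1 − p y) (W y + C y)]` for every `x ≥ 0`,
and that for every `x ≥ 0` the supremum is attained at some `ȳ x ≥ x`.
Then for every `x ≥ 0`: (i) `W x = sup_{y ≥ x} G y`, and (ii) `G (ȳ x)` equals this
supremum, i.e. `ȳ x` is a maximizer of `G` over `[x, ∞)`. -/
theorem W_eq_sup_G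
    (α R : ℝ) (hα0 : 0 < α) (hα1 : α < 1) (hR : 0 < R)
    (C p W : ℝ → ℝ) (ybar : ℝ → ℝ)
    (hp0 : ∀ x, 0 ≤ x → 0 ≤ p x) (hp1 : ∀ x, 0 ≤ x → p x ≤ 1)
    (hbdd : ∀ x, 0 ≤ x →
      BddAbove ((fun y => -C y + p y * R + α * (1 - p y) * (W y + C y)) '' {y | x ≤ y}))
    (hW : ∀ x, 0 ≤ x →
      W x = sSup ((fun y => -C y + p y * R + α * (1 - p y) * (W y + C y)) '' {y | x ≤ y}))
    (hybar_mem : ∀ x, 0 ≤ x → x ≤ ybar x)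
    (hybar_att : ∀ x, 0 ≤ x →
      W x = -C (ybar x) + p (ybar x) * R + α * (1 - p (ybar x)) * (W (ybar x) + C (ybar x))) :
    ∀ x, 0 ≤ x →
      W x = sSup ((fun y => -C y + p y * R / (1 - α + α * p y)) '' {y | x ≤ y}) ∧
      (-C (ybar x) + p (ybar x) * R / (1 - α + α * p (ybar x)))
        = sSup ((fun y => -C y + p y * R / (1 - α + α * p y)) '' {y | x ≤ y}) :=
  W_eq_sup_G_general α R hα0 hα1 C p W ybar hp0 hp1 hbdd hW hybar_mem hybar_att
end

section
/- The following hold: (i) sup over x ≥ 0, δ ≥ 0, σ > 0 of G(x, δ, σ) equals R; (ii) U^{out,*}(γ) ≤ R − 1 for every γ ≥ 0. Consequently there exist a threshold δ ≥ 0 and noise σ > 0 such that the optimal opt-in utility satisfies U*(δ, σ) > R − 1 ≥ U^{out,*}(γ) for every γ ≥ 0; i.e., there exists an audit (a pair of test parameters) ensuring full coverage: every vendor type prefers to participate. -/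
/-!
Since `p ≤ 1 - α + α p` for `α < 1`, the opt-in utility never exceeds `R`. Along the audits
`δ = 0`, `σ = t⁻²` with effort `x = t⁻¹` the standardized gap `(δ - x) / σ = -t` tends to `-∞`,
so the pass probability tends to `1` while the cost of effort tends to `0`, and `G` tends to `R`.
Opting out, on the other hand, costs at least `exp 0 = 1` in liability.
-/

open ProbabilityTheory

/-- The cumulative distribution function of the standard normal distribution. -/
noncomputable def stdNormalCDF : ℝ → ℝ :=
  fun t => ProbabilityTheory.cdf (ProbabilityTheory.gaussianReal 0 1) t

/-- The test function `p(x; δ, σ) := 1 − Φ((δ − x)/σ)`. -/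
noncomputable def testFn (δ σ x : ℝ) : ℝ := 1 - stdNormalCDF ((δ - x) / σ)

/-- `G(x, δ, σ) := −c·x + p(x;δ,σ)·R/(1 − α + α·p(x;δ,σ))`. -/
noncomputable def Gfun (α c R δ σ x : ℝ) : ℝ :=
  -c * x + testFn δ σ x * R / (1 - α + α * testFn δ σ x)

/-- The optimal opt-in utility `U*(δ,σ) := sup_{x ≥ 0} G(x,δ,σ)`. -/
noncomputable def optIn (α c R δ σ : ℝ) : ℝ :=
  sSup ((fun x => Gfun α c R δ σ x) '' {x | 0 ≤ x})

/-- The optimal opt-out utility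
`U^{out,*}(γ) := sup_{x ≥ 0} [R − c·x − exp (γ μZ x + γ² σZ x² / 2)]`. -/
noncomputable def optOut (R c : ℝ) (μZ σZ : ℝ → ℝ) (γ : ℝ) : ℝ :=
  sSup ((fun x => R - c * x - Real.exp (γ * μZ x + γ ^ 2 * (σZ x) ^ 2 / 2)) '' {x | 0 ≤ x})

open Filter Topology

lemma testFn_nonneg (δ σ x : ℝ) : 0 ≤ testFn δ σ x :=
  sub_nonneg.mpr (cdf_le_one _ _)

lemma testFn_le_one (δ σ x : ℝ) : testFn δ σ x ≤ 1 :=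
  sub_le_self _ (cdf_nonneg _ _)

lemma tendsto_testFn_one {ι : Type*} {l : Filter ι} {δ σ x : ι → ℝ}
    (h : Tendsto (fun i => (δ i - x i) / σ i) l atBot) :
    Tendsto (fun i => testFn (δ i) (σ i) (x i)) l (𝓝 1) := by
  simpa [testFn, stdNormalCDF] using ((tendsto_cdf_atBot (gaussianReal 0 1)).comp h).const_sub 1

lemma mul_div_one_sub_add_mul_le {α R p : ℝ} (hα : α < 1) (hR : 0 ≤ R) (hp0 : 0 ≤ p)
    (hp1 : p ≤ 1) : p * R / (1 - α + α * p) ≤ R := by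
  have hp_le : p ≤ 1 - α + α * p := by nlinarith
  rcases hp0.eq_or_lt with rfl | hp
  · simpa using hR
  · rw [div_le_iff₀ (hp.trans_le hp_le)]
    nlinarith

lemma Gfun_le {α c R : ℝ} (hα : α < 1) (hc : 0 ≤ c) (hR : 0 ≤ R) (δ σ : ℝ) {x : ℝ}
    (hx : 0 ≤ x) : Gfun α c R δ σ x ≤ R := by
  have := mul_div_one_sub_add_mul_le hα hR (testFn_nonneg δ σ x) (testFn_le_one δ σ x)
  have : 0 ≤ c * x := mul_nonneg hc hx
  unfold Gfun
  linarith

lemma Gfun_le_optIn {α c R : ℝ} (hα : α < 1) (hc : 0 ≤ c) (hR : 0 ≤ R) (δ σ : ℝ) {x : ℝ}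
    (hx : 0 ≤ x) : Gfun α c R δ σ x ≤ optIn α c R δ σ :=
  le_csSup ⟨R, by rintro _ ⟨y, hy, rfl⟩; exact Gfun_le hα hc hR δ σ hy⟩ ⟨x, hx, rfl⟩

lemma tendsto_Gfun_audit (α c R : ℝ) :
    Tendsto (fun t : ℝ => Gfun α c R 0 (t⁻¹ ^ 2) t⁻¹) atTop (𝓝 R) := by
  have hgap : Tendsto (fun t : ℝ => (0 - t⁻¹) / t⁻¹ ^ 2) atTop atBot := by
    refine tendsto_neg_atTop_atBot.congr' ?_
    filter_upwards [eventually_ne_atTop 0] with t ht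
    field_simp
    ring
  have hp := tendsto_testFn_one hgap
  have hlim := ((tendsto_inv_atTop_zero.const_mul (-c)).add
    ((hp.mul_const R).div ((tendsto_const_nhds (x := 1 - α)).add (hp.const_mul α)) (by simp)))
  simpa [Gfun] using hlim

lemma isLUB_Gfun {α c R : ℝ} (hα : α < 1) (hc : 0 ≤ c) (hR : 0 ≤ R) :
    IsLUB {v : ℝ | ∃ x, 0 ≤ x ∧ ∃ δ, 0 ≤ δ ∧ ∃ σ, 0 < σ ∧ v = Gfun α c R δ σ x} R := by
  refine isLUB_of_mem_closure ?_ (mem_closure_of_tendsto (tendsto_Gfun_audit α c R) ?_)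
  · rintro _ ⟨x, hx, δ, -, σ, -, rfl⟩
    exact Gfun_le hα hc hR δ σ hx
  · filter_upwards [eventually_gt_atTop 0] with t ht
    exact ⟨t⁻¹, by positivity, 0, le_rfl, t⁻¹ ^ 2, by positivity, rfl⟩

lemma exists_audit_lt_optIn {α c R : ℝ} (hα : α < 1) (hc : 0 ≤ c) (hR : 0 ≤ R) {u : ℝ}
    (hu : u < R) : ∃ σ, 0 < σ ∧ u < optIn α c R 0 σ := by
  obtain ⟨t, ht, hGt⟩ :=
    ((eventually_gt_atTop 0).and ((tendsto_Gfun_audit α c R).eventually (lt_mem_nhds hu))).exists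
  exact ⟨t⁻¹ ^ 2, by positivity, hGt.trans_le (Gfun_le_optIn hα hc hR 0 _ (by positivity))⟩

lemma optOut_le {R c γ : ℝ} {μZ : ℝ → ℝ} (σZ : ℝ → ℝ) (hc : 0 ≤ c)
    (hμ : ∀ x, 0 ≤ x → 0 ≤ μZ x) (hγ : 0 ≤ γ) : optOut R c μZ σZ γ ≤ R - 1 := by
  refine csSup_le ⟨_, 0, le_refl (0 : ℝ), rfl⟩ ?_
  rintro _ ⟨x, hx, rfl⟩
  have : 1 ≤ Real.exp (γ * μZ x + γ ^ 2 * σZ x ^ 2 / 2) :=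
    Real.one_le_exp (by have := hμ x hx; positivity)
  have : 0 ≤ c * x := mul_nonneg hc hx
  dsimp only
  linarith

theorem full_coverage_exists_general
    (α c R : ℝ) (hα1 : α < 1) (hc : 0 < c) (hR : 0 < R)
    (μZ σZ : ℝ → ℝ)
    (hμ : ∀ x, 0 ≤ x → 0 ≤ μZ x) :
    sSup {v : ℝ | ∃ x, 0 ≤ x ∧ ∃ δ, 0 ≤ δ ∧ ∃ σ, 0 < σ ∧ v = Gfun α c R δ σ x} = R ∧
    (∀ γ : ℝ, 0 ≤ γ → optOut R c μZ σZ γ ≤ R - 1) ∧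
    ∃ δ, 0 ≤ δ ∧ ∃ σ, 0 < σ ∧
      (R - 1 < optIn α c R δ σ ∧ ∀ γ : ℝ, 0 ≤ γ → optOut R c μZ σZ γ ≤ R - 1) := by
  have hout : ∀ γ : ℝ, 0 ≤ γ → optOut R c μZ σZ γ ≤ R - 1 :=
    fun γ hγ => optOut_le σZ hc.le hμ hγ
  obtain ⟨σ, hσ, hin⟩ := exists_audit_lt_optIn hα1 hc.le hR.le (sub_one_lt R)
  refine ⟨(isLUB_Gfun hα1 hc.le hR.le).csSup_eq ?_, hout, 0, le_rfl, σ, hσ, hin, hout⟩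
  exact ⟨_, 0, le_rfl, 0, le_rfl, 1, one_pos, rfl⟩

/-- Let `α ∈ (0,1)`, `c > 0`, `R > 0`, and `μZ, σZ : [0,∞) → [0,∞)`.
Then: (i) the supremum of `G(x,δ,σ)` over `x ≥ 0`, `δ ≥ 0`, `σ > 0` equals `R`;
(ii) `U^{out,*}(γ) ≤ R − 1` for every `γ ≥ 0`; and consequently there exist a
threshold `δ ≥ 0` and a noise `σ > 0` such that `U*(δ,σ) > R − 1 ≥ U^{out,*}(γ)`
for every `γ ≥ 0` — an audit ensuring full coverage. -/
theorem full_coverage_exists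
    (α c R : ℝ) (hα0 : 0 < α) (hα1 : α < 1) (hc : 0 < c) (hR : 0 < R)
    (μZ σZ : ℝ → ℝ)
    (hμ : ∀ x, 0 ≤ x → 0 ≤ μZ x) (hσ : ∀ x, 0 ≤ x → 0 ≤ σZ x) :
    sSup {v : ℝ | ∃ x, 0 ≤ x ∧ ∃ δ, 0 ≤ δ ∧ ∃ σ, 0 < σ ∧ v = Gfun α c R δ σ x} = R ∧
    (∀ γ : ℝ, 0 ≤ γ → optOut R c μZ σZ γ ≤ R - 1) ∧
    ∃ δ, 0 ≤ δ ∧ ∃ σ, 0 < σ ∧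
      (R - 1 < optIn α c R δ σ ∧ ∀ γ : ℝ, 0 ≤ γ → optOut R c μZ σZ γ ≤ R - 1) :=
  full_coverage_exists_general α c R hα1 hc hR μZ σZ hμ
end

section
/- Define f(x) := −c·x + R·(x − b)/(1 − α + α·(x − b)) for x ≥ b, and set x̄ := b − (1−α)/α + √((1−α)·R/(α²·c)). Then f is strictly increasing on [b, x̄] (when x̄ ≥ b) and strictly decreasing on [max(b, x̄), ∞); moreover, if x̄ ≥ b, then f(x̄) = (1/α)·[(√R − √((1−α)·c))² − α·b·c]. -/
/-!
Writing `D x = 1 - α + α (x - b)` for the denominator, which is positive on `[b, ∞)`,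
the difference quotient of `f` is
`(f y - f x) / (y - x) = ((1 - α) R - c D(x) D(y)) / (D(x) D(y))`,
and `x̄` is exactly the point where `c D(x̄)² = (1 - α) R`. So `f` rises while both
denominators stay below `D(x̄)` and falls once both are above it, with no calculus needed.
The peak value follows from `D(x̄) = α √((1 - α) R / (α² c))` and
`√R · √((1 - α) c) = α c √((1 - α) R / (α² c))`.
-/

open Real

noncomputable section

def middleDenom (α b x : ℝ) : ℝ := 1 - α + α * (x - b)

def middlePiece (α c R b x : ℝ) : ℝ := -c * x + R * (x - b) / middleDenom α b x

def middlePeak (α c R b : ℝ) : ℝ := b - (1 - α) / α + √((1 - α) * R / (α ^ 2 * c))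

end

section

variable {α c R b : ℝ}

theorem middleDenom_strictMono (hα : 0 < α) : StrictMono (middleDenom α b) :=
  fun x y hxy => by unfold middleDenom; nlinarith

theorem middleDenom_pos (hα0 : 0 ≤ α) (hα1 : α < 1) {x : ℝ} (hx : b ≤ x) :
    0 < middleDenom α b x := by
  unfold middleDenom; nlinarith

theorem middleDenom_middlePeak (hα : α ≠ 0) :
    middleDenom α b (middlePeak α c R b) = α * √((1 - α) * R / (α ^ 2 * c)) := by
  unfold middleDenom middlePeak; field_simp; ring

theorem mul_sq_middleDenom_middlePeak (hα : α ≠ 0) (hc : 0 < c) (hR : 0 ≤ (1 - α) * R) :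
    c * middleDenom α b (middlePeak α c R b) ^ 2 = (1 - α) * R := by
  rw [middleDenom_middlePeak hα, mul_pow, sq_sqrt (by positivity)]
  field_simp

theorem middlePiece_sub {x y : ℝ} (hx : middleDenom α b x ≠ 0) (hy : middleDenom α b y ≠ 0) :
    middlePiece α c R b y - middlePiece α c R b x =
      (y - x) * ((1 - α) * R - c * (middleDenom α b x * middleDenom α b y)) /
        (middleDenom α b x * middleDenom α b y) := by
  unfold middlePiece
  field_simp
  unfold middleDenom
  ring

theorem strictMonoOn_middlePiece_of {S : Set ℝ} (hpos : ∀ x ∈ S, 0 < middleDenom α b x)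
    (hlt : ∀ x ∈ S, ∀ y ∈ S, x < y →
      c * (middleDenom α b x * middleDenom α b y) < (1 - α) * R) :
    StrictMonoOn (middlePiece α c R b) S := by
  intro x hx y hy hxy
  have hDx := hpos x hx
  have hDy := hpos y hy
  rw [← sub_pos, middlePiece_sub hDx.ne' hDy.ne']
  exact div_pos (mul_pos (sub_pos.2 hxy) (sub_pos.2 (hlt x hx y hy hxy))) (mul_pos hDx hDy)

theorem strictAntiOn_middlePiece_of {S : Set ℝ} (hpos : ∀ x ∈ S, 0 < middleDenom α b x)
    (hgt : ∀ x ∈ S, ∀ y ∈ S, x < y →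
      (1 - α) * R < c * (middleDenom α b x * middleDenom α b y)) :
    StrictAntiOn (middlePiece α c R b) S := by
  intro x hx y hy hxy
  have hDx := hpos x hx
  have hDy := hpos y hy
  rw [← sub_neg, middlePiece_sub hDx.ne' hDy.ne']
  exact div_neg_of_neg_of_pos
    (mul_neg_of_pos_of_neg (sub_pos.2 hxy) (sub_neg.2 (hgt x hx y hy hxy))) (mul_pos hDx hDy)

theorem strictMonoOn_middlePiece_Icc (hα0 : 0 < α) (hα1 : α < 1) (hc : 0 < c) (hR : 0 ≤ R) :
    StrictMonoOn (middlePiece α c R b) (Set.Icc b (middlePeak α c R b)) := by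
  have hpeak := mul_sq_middleDenom_middlePeak (R := R) (b := b) hα0.ne' hc (by nlinarith)
  refine strictMonoOn_middlePiece_of (fun x hx => middleDenom_pos hα0.le hα1 hx.1) ?_
  intro x hx y hy hxy
  have hDx := middleDenom_pos hα0.le hα1 hx.1
  have hxy' := middleDenom_strictMono (b := b) hα0 hxy
  have hyp := (middleDenom_strictMono (b := b) hα0).monotone hy.2
  rw [← hpeak]
  refine mul_lt_mul_of_pos_left ?_ hc
  calc middleDenom α b x * middleDenom α b y
      < middleDenom α b y * middleDenom α b y := by gcongr; linarith
    _ ≤ middleDenom α b (middlePeak α c R b) ^ 2 := by rw [sq]; gcongr <;> linarith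

theorem strictAntiOn_middlePiece_Ici (hα0 : 0 < α) (hα1 : α < 1) (hc : 0 < c) (hR : 0 ≤ R) :
    StrictAntiOn (middlePiece α c R b) (Set.Ici (max b (middlePeak α c R b))) := by
  have hpeak := mul_sq_middleDenom_middlePeak (R := R) (b := b) hα0.ne' hc (by nlinarith)
  have hpeak0 : 0 ≤ middleDenom α b (middlePeak α c R b) := by
    rw [middleDenom_middlePeak hα0.ne']; positivity
  refine strictAntiOn_middlePiece_of
    (fun x hx => middleDenom_pos hα0.le hα1 (le_of_max_le_left hx)) ?_
  intro x hx y hy hxy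
  have hDx := middleDenom_pos hα0.le hα1 (le_of_max_le_left hx)
  have hxp := (middleDenom_strictMono (b := b) hα0).monotone (le_of_max_le_right hx)
  have hxy' := middleDenom_strictMono (b := b) hα0 hxy
  rw [← hpeak]
  refine mul_lt_mul_of_pos_left ?_ hc
  calc middleDenom α b (middlePeak α c R b) ^ 2
      ≤ middleDenom α b x * middleDenom α b x := by rw [sq]; gcongr
    _ < middleDenom α b x * middleDenom α b y := by gcongr

theorem middlePiece_middlePeak (hα0 : 0 < α) (hα1 : α < 1) (hc : 0 < c) (hR : 0 < R) :
    middlePiece α c R b (middlePeak α c R b) =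
      (1 / α) * ((√R - √((1 - α) * c)) ^ 2 - α * b * c) := by
  set s := √((1 - α) * R / (α ^ 2 * c)) with hs_def
  have hs : 0 < s := sqrt_pos.2 (div_pos (mul_pos (by linarith) hR) (by positivity))
  have hs2 : c * (α * s) ^ 2 = (1 - α) * R := by
    rw [← middleDenom_middlePeak (b := b) hα0.ne']
    exact mul_sq_middleDenom_middlePeak hα0.ne' hc (by nlinarith)
  have hprod : √R * √((1 - α) * c) = α * c * s := by
    rw [← sqrt_mul hR.le, ← sqrt_sq (by positivity : 0 ≤ α * c * s)]
    congr 1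
    linear_combination (-c) * hs2
  have hsq : (√R - √((1 - α) * c)) ^ 2 = R - 2 * (α * c * s) + (1 - α) * c := by
    rw [sub_sq, sq_sqrt hR.le, sq_sqrt (by nlinarith), mul_assoc, hprod]
  unfold middlePiece
  rw [middleDenom_middlePeak hα0.ne', hsq]
  unfold middlePeak
  rw [← hs_def]
  field_simp
  linear_combination hs2

end

/-- Let `α ∈ (0,1)`, `c > 0`, `R > 0`, `b ∈ ℝ`.  Define
`f x := −c·x + R·(x−b)/(1−α+α·(x−b))` and
`x̄ := b − (1−α)/α + √((1−α)·R/(α²·c))`.  Then `f` is strictly increasing on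
`[b, x̄]` (when `x̄ ≥ b`), strictly decreasing on `[max b x̄, ∞)`, and if
`x̄ ≥ b` then `f x̄ = (1/α)·[(√R − √((1−α)·c))² − α·b·c]`. -/
theorem middle_piece_shape
    (α c R b : ℝ) (hα0 : 0 < α) (hα1 : α < 1) (hc : 0 < c) (hR : 0 < R) :
    (b ≤ b - (1 - α) / α + Real.sqrt ((1 - α) * R / (α ^ 2 * c)) →
      StrictMonoOn (fun x => -c * x + R * (x - b) / (1 - α + α * (x - b)))
        (Set.Icc b (b - (1 - α) / α + Real.sqrt ((1 - α) * R / (α ^ 2 * c))))) ∧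
    StrictAntiOn (fun x => -c * x + R * (x - b) / (1 - α + α * (x - b)))
      (Set.Ici (max b (b - (1 - α) / α + Real.sqrt ((1 - α) * R / (α ^ 2 * c))))) ∧
    (b ≤ b - (1 - α) / α + Real.sqrt ((1 - α) * R / (α ^ 2 * c)) →
      (fun x => -c * x + R * (x - b) / (1 - α + α * (x - b)))
          (b - (1 - α) / α + Real.sqrt ((1 - α) * R / (α ^ 2 * c)))
        = (1 / α) * ((Real.sqrt R - Real.sqrt ((1 - α) * c)) ^ 2 - α * b * c)) :=
  ⟨fun _ => strictMonoOn_middlePiece_Icc hα0 hα1 hc hR.le,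
    strictAntiOn_middlePiece_Ici hα0 hα1 hc hR.le,
    fun _ => middlePiece_middlePeak hα0 hα1 hc hR⟩
end

section
/- If R/c < 1 − α, then for every entrance value b ≥ 0 the function G^b is strictly decreasing on ℝ. In particular, x = 0 is the unique maximizer of G^b over [0,∞), so no entrance value can incentivize a positive investment. -/
/-- `G^b`, the expected-utility function under the static audit with the
truncated-linear test with entrance value `b`. -/
noncomputable def Gb (α c R b : ℝ) : ℝ → ℝ := fun x =>
  if x < b then -c * x
  else if x < b + 1 then -c * x + R * (x - b) / (1 - α + α * (x - b))
  else R - c * x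

/-- Let `α ∈ (0,1)`, `c > 0`, `R > 0`.  If `R/c < 1 − α`,
then for every entrance value `b ≥ 0` the function `G^b` is strictly decreasing
on `ℝ`; in particular `x = 0` is the unique maximizer of `G^b` over `[0,∞)`. -/
theorem low_RoSI_no_incentive
    (α c R : ℝ) (hα0 : 0 < α) (hα1 : α < 1) (hc : 0 < c) (hR : 0 < R)
    (hlow : R / c < 1 - α) :
    ∀ b, 0 ≤ b →
      StrictAnti (Gb α c R b) ∧ (∀ x : ℝ, 0 < x → Gb α c R b x < Gb α c R b 0) := by
  intro b hb
  have hRc : R < c * (1 - α) := by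
    have := (div_lt_iff₀ hc).mp hlow
    linarith
  have h1α : (0:ℝ) < 1 - α := by linarith
  -- the middle-piece formula
  set g : ℝ → ℝ := fun x => -c * x + R * (x - b) / (1 - α + α * (x - b)) with hg
  -- Gb agrees with the formulas on the pieces
  have hleft : ∀ x ∈ Set.Iic b, Gb α c R b x = -c * x := by
    intro x hx
    rcases lt_or_eq_of_le (Set.mem_Iic.mp hx) with h | h
    · simp [Gb, h]
    · subst h
      simp [Gb, lt_irrefl, show x < x + 1 by linarith]
  have hmid : ∀ x ∈ Set.Icc b (b + 1), Gb α c R b x = g x := by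
    intro x hx
    obtain ⟨h1, h2⟩ := hx
    rcases lt_or_eq_of_le h2 with h | h
    · simp [Gb, g, not_lt.mpr h1, h]
    · subst h
      have : ¬ (b + 1 < b) := by linarith
      simp only [Gb, g, show ¬ (b + 1 < b) from by linarith, if_false,
        lt_irrefl, if_false]
      have : b + 1 - b = 1 := by ring
      rw [this]
      field_simp
      ring
  have hright : ∀ x ∈ Set.Ici (b + 1), Gb α c R b x = R - c * x := by
    intro x hx
    have h1 : ¬ x < b := by simp at hx; linarith
    have h2 : ¬ x < b + 1 := not_lt.mpr hx
    simp [Gb, h1, h2]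
  -- strict antitonicity on each piece
  have hA1 : StrictAntiOn (Gb α c R b) (Set.Iic b) := by
    intro x hx y hy hxy
    rw [hleft x hx, hleft y hy]
    nlinarith
  have hA2 : StrictAntiOn (Gb α c R b) (Set.Icc b (b + 1)) := by
    intro x hx y hy hxy
    rw [hmid x hx, hmid y hy]
    obtain ⟨hx1, hx2⟩ := hx
    obtain ⟨hy1, hy2⟩ := hy
    have hDx : 1 - α ≤ 1 - α + α * (x - b) := by nlinarith
    have hDy : 1 - α ≤ 1 - α + α * (y - b) := by nlinarith
    have hDx0 : (0:ℝ) < 1 - α + α * (x - b) := lt_of_lt_of_le h1α hDx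
    have hDy0 : (0:ℝ) < 1 - α + α * (y - b) := lt_of_lt_of_le h1α hDy
    simp only [g]
    have key : R * (y - b) / (1 - α + α * (y - b)) - R * (x - b) / (1 - α + α * (x - b))
        < c * (y - x) := by
      rw [div_sub_div _ _ (ne_of_gt hDy0) (ne_of_gt hDx0),
        div_lt_iff₀ (mul_pos hDy0 hDx0)]
      have hyx : 0 < y - x := sub_pos.mpr hxy
      have h1 : (1 - α) * (1 - α) ≤ (1 - α + α * (y - b)) * (1 - α + α * (x - b)) :=
        mul_le_mul hDy hDx (le_of_lt h1α) (le_of_lt hDy0)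
      have h2 : c * (y - x) * ((1 - α) * (1 - α))
          ≤ c * (y - x) * ((1 - α + α * (y - b)) * (1 - α + α * (x - b))) :=
        mul_le_mul_of_nonneg_left h1 (by positivity)
      have h3 : R * (1 - α) * (y - x) < c * (y - x) * ((1 - α) * (1 - α)) := by
        nlinarith [mul_pos h1α hyx]
      nlinarith [h2, h3]
    linarith
  have hA3 : StrictAntiOn (Gb α c R b) (Set.Ici (b + 1)) := by
    intro x hx y hy hxy
    rw [hright x hx, hright y hy]
    nlinarith
  -- glue
  have hA12 : StrictAntiOn (Gb α c R b) (Set.Iic (b + 1)) := by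
    have := hA1.union hA2 isGreatest_Iic ⟨⟨le_refl b, by linarith⟩, fun z hz => hz.1⟩
    rwa [Set.Iic_union_Icc_eq_Iic (by linarith : b ≤ b + 1)] at this
  have hanti : StrictAnti (Gb α c R b) := hA12.Iic_union_Ici hA3
  exact ⟨hanti, fun x hx => hanti hx⟩
end

section
/- Assume 1 − α ≤ R/c < 1/(1−α). Set b* := (√R − √((1−α)·c))²/(α·c) and x* := (R − √((1−α)·R·c))/(α·c). Then: (i) G^{b*}(x*) = 0 and G^{b*}(y) ≤ 0 for all y ≥ 0, so x* is a maximizer of G^{b*} over [0,∞) with nonnegative value; and (ii) for every entrance value b ≥ 0 and every x ≥ 0 such that x maximizes G^b over [0,∞) and G^b(x) ≥ 0, one has x ≤ x*. Hence x* is the maximal incentivizable investment under a static linear-test audit. -/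
namespace StaticAudit

noncomputable def testGain (α c R t : ℝ) : ℝ := R * t / (1 - α + α * t) - c * t

noncomputable def peakGain (α c R : ℝ) : ℝ := (R + (1 - α) * c - 2 * √((1 - α) * R * c)) / α

noncomputable def peakPoint (α c R : ℝ) : ℝ := (√((1 - α) * R * c) - (1 - α) * c) / (α * c)

variable {α c R : ℝ}

theorem testGain_one : testGain α c R 1 = R - c := by
  simp [testGain]

theorem peakGain_sub_testGain (hα : α ≠ 0) (hc : c ≠ 0) (hR : 0 ≤ (1 - α) * R * c) {t : ℝ}
    (hu : 1 - α + α * t ≠ 0) :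
    peakGain α c R - testGain α c R t =
      (c * (1 - α + α * t) - √((1 - α) * R * c)) ^ 2 / (α * c * (1 - α + α * t)) := by
  unfold peakGain testGain
  generalize hs : √((1 - α) * R * c) = s
  have hs2 : s ^ 2 = (1 - α) * R * c := hs ▸ Real.sq_sqrt hR
  field_simp
  linear_combination (-1) * hs2

theorem testGain_le_peakGain (hα0 : 0 < α) (hα1 : α < 1) (hc : 0 < c) (hR : 0 ≤ R) {t : ℝ}
    (ht : 0 ≤ t) : testGain α c R t ≤ peakGain α c R := by
  have hu : 0 < 1 - α + α * t := by nlinarith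
  have hgap := peakGain_sub_testGain (R := R) hα0.ne' hc.ne' (by positivity) hu.ne'
  exact sub_nonneg.mp (hgap ▸ by positivity)

theorem testGain_eq_peakGain_iff (hα0 : 0 < α) (hα1 : α < 1) (hc : 0 < c) (hR : 0 ≤ R)
    {t : ℝ} (ht : 0 ≤ t) : testGain α c R t = peakGain α c R ↔ t = peakPoint α c R := by
  have hu : 0 < 1 - α + α * t := by nlinarith
  have hβ : 0 < 1 - α := by linarith
  rw [eq_comm, ← sub_eq_zero,
    peakGain_sub_testGain (R := R) hα0.ne' hc.ne' (by positivity) hu.ne', div_eq_zero_iff,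
    or_iff_left (by positivity), pow_eq_zero_iff two_ne_zero, sub_eq_zero, peakPoint,
    eq_div_iff (by positivity)]
  constructor <;> intro h <;> linarith

theorem peakPoint_nonneg (hα0 : 0 < α) (hα1 : α < 1) (hc : 0 < c) (hR : (1 - α) * c ≤ R) :
    0 ≤ peakPoint α c R := by
  have hβc : 0 ≤ (1 - α) * c := by nlinarith
  have : (1 - α) * c ≤ √((1 - α) * R * c) :=
    (Real.le_sqrt hβc (by nlinarith)).mpr (by nlinarith)
  exact div_nonneg (by linarith) (by positivity)

theorem peakPoint_lt_one (hα0 : 0 < α) (hc : 0 < c) (hR : (1 - α) * R < c) :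
    peakPoint α c R < 1 := by
  have : √((1 - α) * R * c) < c := (Real.sqrt_lt' hc).mpr (by nlinarith)
  rw [peakPoint, div_lt_one (by positivity)]
  linarith

theorem peakGain_div_eq (hR : 0 ≤ R) (hβc : 0 ≤ (1 - α) * c) :
    peakGain α c R / c = (√R - √((1 - α) * c)) ^ 2 / (α * c) := by
  have hmul : √R * √((1 - α) * c) = √((1 - α) * R * c) := by
    rw [← Real.sqrt_mul hR]
    ring_nf
  rw [peakGain, div_div, mul_comm α c, sub_sq, Real.sq_sqrt hR, Real.sq_sqrt hβc, mul_assoc 2,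
    hmul]
  ring_nf

theorem peakGain_div_add_peakPoint :
    peakGain α c R / c + peakPoint α c R = (R - √((1 - α) * R * c)) / (α * c) := by
  rw [peakGain, peakPoint, div_div, ← add_div]
  ring_nf

variable {b x t : ℝ}

theorem Gb_of_lt (h : x < b) : Gb α c R b x = -c * x := by
  simp [Gb, h]

theorem Gb_add (ht0 : 0 ≤ t) (ht1 : t < 1) :
    Gb α c R b (b + t) = testGain α c R t - c * b := by
  simp only [Gb, testGain, not_lt.mpr (le_add_of_nonneg_right ht0), add_lt_add_iff_left, ht1,
    add_sub_cancel_left, if_false, if_true]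
  ring

theorem Gb_le_testGain_min (hc : 0 ≤ c) (hbx : b ≤ x) :
    Gb α c R b x ≤ testGain α c R (min (x - b) 1) - c * b := by
  rcases lt_or_ge x (b + 1) with hx | hx
  · rw [min_eq_left (by linarith), ← Gb_add (sub_nonneg.mpr hbx) (by linarith),
      add_sub_cancel]
  · have hG : Gb α c R b x = R - c * x := by simp [Gb, not_lt.mpr hbx, not_lt.mpr hx]
    rw [min_eq_right (by linarith), testGain_one, hG]
    nlinarith

theorem peakGain_nonneg (hα0 : 0 < α) (hα1 : α < 1) (hc : 0 < c) (hR : 0 ≤ R) :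
    0 ≤ peakGain α c R := by
  simpa [testGain] using testGain_le_peakGain hα0 hα1 hc hR le_rfl

theorem Gb_le_peakGain_sub (hα0 : 0 < α) (hα1 : α < 1) (hc : 0 < c) (hR : 0 ≤ R)
    (hbx : b ≤ x) : Gb α c R b x ≤ peakGain α c R - c * b :=
  (Gb_le_testGain_min hc.le hbx).trans <| sub_le_sub_right
    (testGain_le_peakGain hα0 hα1 hc hR (le_min (sub_nonneg.mpr hbx) zero_le_one)) _

theorem Gb_peakGain_div_add_peakPoint (hα0 : 0 < α) (hα1 : α < 1) (hc : 0 < c) (hR : 0 ≤ R)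
    (h0 : 0 ≤ peakPoint α c R) (h1 : peakPoint α c R < 1) :
    Gb α c R (peakGain α c R / c) (peakGain α c R / c + peakPoint α c R) = 0 := by
  rw [Gb_add h0 h1, (testGain_eq_peakGain_iff hα0 hα1 hc hR h0).mpr rfl,
    mul_div_cancel₀ _ hc.ne', sub_self]

theorem Gb_peakGain_div_nonpos (hα0 : 0 < α) (hα1 : α < 1) (hc : 0 < c) (hR : 0 ≤ R)
    (hx : 0 ≤ x) : Gb α c R (peakGain α c R / c) x ≤ 0 := by
  rcases lt_or_ge x (peakGain α c R / c) with hlt | hle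
  · rw [Gb_of_lt hlt]
    nlinarith
  · simpa only [mul_div_cancel₀ _ hc.ne', sub_self] using Gb_le_peakGain_sub hα0 hα1 hc hR hle

theorem le_peakGain_div_add_peakPoint_of_isMax (hα0 : 0 < α) (hα1 : α < 1) (hc : 0 < c)
    (hR : 0 ≤ R) (h0 : 0 ≤ peakPoint α c R) (h1 : peakPoint α c R < 1) (hb : 0 ≤ b)
    (hmax : ∀ y, 0 ≤ y → Gb α c R b y ≤ Gb α c R b x) (hpos : 0 ≤ Gb α c R b x) :
    x ≤ peakGain α c R / c + peakPoint α c R := by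
  have hpeak : 0 ≤ peakGain α c R / c := div_nonneg (peakGain_nonneg hα0 hα1 hc hR) hc.le
  rcases lt_or_ge x b with hxb | hbx
  · rw [Gb_of_lt hxb] at hpos
    nlinarith
  have hattained : peakGain α c R - c * b ≤ Gb α c R b x := by
    rw [← (testGain_eq_peakGain_iff hα0 hα1 hc hR h0).mpr rfl, ← Gb_add h0 h1]
    exact hmax _ (by positivity)
  have hmin : min (x - b) 1 = peakPoint α c R := by
    have hmin0 : 0 ≤ min (x - b) 1 := le_min (sub_nonneg.mpr hbx) zero_le_one
    refine (testGain_eq_peakGain_iff hα0 hα1 hc hR hmin0).mp <|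
      le_antisymm (testGain_le_peakGain hα0 hα1 hc hR hmin0) ?_
    linarith [Gb_le_testGain_min (α := α) (R := R) hc.le hbx]
  have hxb : x - b = peakPoint α c R := by
    rwa [min_eq_left] at hmin
    by_contra! h
    rw [min_eq_right h.le] at hmin
    linarith
  have hbpeak : b ≤ peakGain α c R / c := by
    rw [le_div_iff₀ hc]
    linarith [Gb_le_peakGain_sub hα0 hα1 hc hR hbx]
  linarith

end StaticAudit

open StaticAudit

/-- Let `α ∈ (0,1)`, `c > 0`, `R > 0` with
`1 − α ≤ R/c < 1/(1−α)`.  Set `b* := (√R − √((1−α)c))²/(αc)` and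
`x* := (R − √((1−α)Rc))/(αc)`.  Then: (i) `G^{b*}(x*) = 0` and `G^{b*}(y) ≤ 0`
for all `y ≥ 0`, so `x*` maximizes `G^{b*}` over `[0,∞)` with nonnegative value;
(ii) for every `b ≥ 0` and every `x ≥ 0` maximizing `G^b` over `[0,∞)` with
`G^b(x) ≥ 0`, one has `x ≤ x*`.  Hence `x*` is the maximal incentivizable
investment under a static linear-test audit. -/
theorem static_incentivizable_investment_mid
    (α c R : ℝ) (hα0 : 0 < α) (hα1 : α < 1) (hc : 0 < c) (hR : 0 < R)
    (hlo : 1 - α ≤ R / c) (hhi : R / c < 1 / (1 - α)) :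
    (Gb α c R ((Real.sqrt R - Real.sqrt ((1 - α) * c)) ^ 2 / (α * c))
        ((R - Real.sqrt ((1 - α) * R * c)) / (α * c)) = 0 ∧
      ∀ y, 0 ≤ y →
        Gb α c R ((Real.sqrt R - Real.sqrt ((1 - α) * c)) ^ 2 / (α * c)) y ≤ 0) ∧
    (∀ b, 0 ≤ b → ∀ x, 0 ≤ x →
      (∀ y, 0 ≤ y → Gb α c R b y ≤ Gb α c R b x) → 0 ≤ Gb α c R b x →
        x ≤ (R - Real.sqrt ((1 - α) * R * c)) / (α * c)) := by
  have hlo' : (1 - α) * c ≤ R := (le_div_iff₀ hc).mp hlo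
  have hhi' : (1 - α) * R < c := by
    rw [div_lt_div_iff₀ hc (by linarith)] at hhi
    linarith
  have h0 := peakPoint_nonneg hα0 hα1 hc hlo'
  have h1 := peakPoint_lt_one hα0 hc hhi'
  rw [← peakGain_div_eq hR.le (by nlinarith), ← peakGain_div_add_peakPoint]
  exact ⟨⟨Gb_peakGain_div_add_peakPoint hα0 hα1 hc hR.le h0 h1,
      fun _ hy => Gb_peakGain_div_nonpos hα0 hα1 hc hR.le hy⟩,
    fun _ hb _ _ hmax hpos =>
      le_peakGain_div_add_peakPoint_of_isMax hα0 hα1 hc hR.le h0 h1 hb hmax hpos⟩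
end

section
/- Assume R/c ≥ 1/(1−α). Set b* := R/c − 1 and x* := R/c. Then: (i) G^{b*}(x*) = 0 and G^{b*}(y) ≤ 0 for all y ≥ 0, so x* is a maximizer of G^{b*} over [0,∞) with nonnegative value; and (ii) for every entrance value b ≥ 0 and every x ≥ 0 with G^b(x) ≥ 0, one has x ≤ R/c. Hence the maximal incentivizable investment equals the investment capacity R/c, attained by setting b = R/c − 1. -/
/-- Let `α ∈ (0,1)`, `c > 0`, `R > 0` with `R/c ≥ 1/(1−α)`.
Set `b* := R/c − 1` and `x* := R/c`.  Then: (i) `G^{b*}(x*) = 0` and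
`G^{b*}(y) ≤ 0` for all `y ≥ 0`, so `x*` maximizes `G^{b*}` over `[0,∞)` with
nonnegative value; (ii) for every `b ≥ 0` and every `x ≥ 0` with `G^b(x) ≥ 0`,
`x ≤ R/c`.  Hence the maximal incentivizable investment equals the investment
capacity `R/c`, attained at `b = R/c − 1`. -/
theorem static_incentivizable_investment_high
    (α c R : ℝ) (hα0 : 0 < α) (hα1 : α < 1) (hc : 0 < c) (hR : 0 < R)
    (hhi : 1 / (1 - α) ≤ R / c) :
    (Gb α c R (R / c - 1) (R / c) = 0 ∧
      ∀ y, 0 ≤ y → Gb α c R (R / c - 1) y ≤ 0) ∧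
    (∀ b, 0 ≤ b → ∀ x, 0 ≤ x → 0 ≤ Gb α c R b x → x ≤ R / c) := by
  have h1α : 0 < 1 - α := by linarith
  have hcK : c * (R / c) = R := by field_simp
  have hRα : c ≤ R * (1 - α) := by
    rw [div_le_div_iff₀ h1α hc] at hhi; linarith
  refine ⟨⟨?_, ?_⟩, ?_⟩
  · unfold Gb
    rw [if_neg (by linarith), if_neg (by linarith)]
    linarith
  · intro y hy
    unfold Gb
    split_ifs with h1 h2
    · nlinarith
    · set t := y - (R / c - 1) with ht
      have ht0 : 0 ≤ t := by simp [ht]; linarith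
      have ht1 : t < 1 := by simp [ht] at *; linarith
      have hD : 0 < 1 - α + α * t := by nlinarith
      have hcy : c * y = R - c + c * t := by
        have : y = R / c - 1 + t := by ring
        rw [this]; nlinarith
      have key : R * t / (1 - α + α * t) ≤ c * y := by
        rw [div_le_iff₀ hD, hcy]
        nlinarith [mul_nonneg (mul_nonneg hα0.le hc.le) (sq_nonneg (1 - t)),
          mul_nonneg (sub_nonneg.2 ht1.le) (sub_nonneg.2 hRα)]
      linarith
    · nlinarith
  · intro b hb x hx hG
    unfold Gb at hG
    split_ifs at hG with h1 h2
    · have : x ≤ 0 := by nlinarith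
      have : x = 0 := le_antisymm this hx
      rw [this]; positivity
    · set t := x - b with ht
      have ht0 : 0 ≤ t := by simp [ht]; linarith
      have ht1 : t < 1 := by simp [ht] at *; linarith
      have hD : 0 < 1 - α + α * t := by nlinarith
      have htD : t ≤ 1 - α + α * t := by nlinarith
      have hdiv : R * t / (1 - α + α * t) ≤ R := by
        rw [div_le_iff₀ hD]; nlinarith
      have : c * x ≤ R := by linarith
      rw [le_div_iff₀ hc]; linarith
    · rw [le_div_iff₀ hc]; linarith
end

section
/- Assume 1 − α ≤ R/c ≤ 1/(1−α) and b ≥ 0. Then for every x ∈ ℝ, sup_{z ≥ x} G^b(z) equals: −c·x if x < b − (√(R/(α·c)) − √((1−α)/α))²; (1/α)·(√R − √((1−α)·c))² − b·c if b − (√(R/(α·c)) − √((1−α)/α))² ≤ x < b − (1−α)/α + √((1−α)·R/(α²·c)); G^b(x) = −c·x + R·(x − b)/(1 − α + α·(x − b)) if b − (1−α)/α + √((1−α)·R/(α²·c)) ≤ x < b + 1; and R − c·x if x ≥ b + 1. -/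
open Set

noncomputable def peakDenom (α c R : ℝ) : ℝ := √((1 - α) * R / c)

noncomputable def peakOffset (α c R : ℝ) : ℝ := (peakDenom α c R - (1 - α)) / α

noncomputable def peakValue (α c R : ℝ) : ℝ := (1 / α) * (√R - √((1 - α) * c)) ^ 2

lemma peakValue_nonneg {α c R : ℝ} (hα : 0 < α) : 0 ≤ peakValue α c R := by
  rw [peakValue]
  positivity

lemma sq_sqrt_sub_sqrt_eq_peakValue_div {α c R : ℝ} (hα : 0 < α) (hα1 : α ≤ 1) (hc : 0 < c)
    (hR : 0 ≤ R) : (√(R / (α * c)) - √((1 - α) / α)) ^ 2 = peakValue α c R / c := by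
  have h1α : 0 ≤ 1 - α := by linarith
  rw [show (1 - α) / α = (1 - α) * c / (α * c) by field_simp, Real.sqrt_div hR,
    Real.sqrt_div (by positivity), ← sub_div, div_pow, Real.sq_sqrt (by positivity), peakValue]
  field_simp

lemma sub_div_add_sqrt_eq_add_peakOffset {α c R : ℝ} (hα : 0 < α) (b : ℝ) :
    b - (1 - α) / α + √((1 - α) * R / (α ^ 2 * c)) = b + peakOffset α c R := by
  rw [show (1 - α) * R / (α ^ 2 * c) = (1 - α) * R / c / α ^ 2 by ring,
    Real.sqrt_div' _ (sq_nonneg α), Real.sqrt_sq hα.le, peakOffset, peakDenom]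
  ring

lemma sq_sub_div_le_sq_sub_div {s d₁ d₂ : ℝ} (hs : 0 ≤ s) (h₁ : s ≤ d₁) (h₁₂ : d₁ ≤ d₂)
    (hd₁ : 0 < d₁) : (d₁ - s) ^ 2 / d₁ ≤ (d₂ - s) ^ 2 / d₂ := by
  rw [div_le_div_iff₀ hd₁ (hd₁.trans_le h₁₂)]
  nlinarith [mul_nonneg (sub_nonneg.2 h₁₂) (sub_nonneg.2 (mul_le_mul h₁ (h₁.trans h₁₂) hs hd₁.le))]

section Profile

variable {α c R b x z : ℝ}

lemma Gb_of_lt (h : x < b) : Gb α c R b x = -c * x := if_pos h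

lemma Gb_of_add_one_le (h : b + 1 ≤ x) : Gb α c R b x = R - c * x := by
  simp [Gb, h.not_gt, (by linarith : ¬ x < b)]

lemma Gb_of_mem_Icc (h : x ∈ Icc b (b + 1)) :
    Gb α c R b x = -c * x + R * (x - b) / (1 - α + α * (x - b)) := by
  rcases h.2.lt_or_eq with h₂ | rfl
  · simp [Gb, h.1.not_gt, h₂]
  · rw [Gb_of_add_one_le le_rfl]
    ring_nf

lemma mul_sq_peakDenom (hα : α ≤ 1) (hc : 0 < c) (hR : 0 ≤ R) :
    c * peakDenom α c R ^ 2 = (1 - α) * R := by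
  have h1α : 0 ≤ 1 - α := by linarith
  rw [peakDenom, Real.sq_sqrt (by positivity)]
  field_simp

lemma mul_peakDenom (hc : 0 < c) (hR : 0 ≤ R) :
    c * peakDenom α c R = √R * √((1 - α) * c) := by
  calc c * peakDenom α c R = √(c ^ 2) * √((1 - α) * R / c) := by
        rw [Real.sqrt_sq hc.le, peakDenom]
    _ = √(c ^ 2 * ((1 - α) * R / c)) := (Real.sqrt_mul (sq_nonneg c) _).symm
    _ = √R * √((1 - α) * c) := by
      rw [← Real.sqrt_mul hR]
      congr 1
      field_simp

lemma mul_peakValue (hα : 0 < α) (hα1 : α ≤ 1) (hc : 0 < c) (hR : 0 ≤ R) :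
    α * peakValue α c R = R + (1 - α) * c - 2 * (c * peakDenom α c R) := by
  rw [peakValue, mul_peakDenom hc hR, ← mul_assoc, mul_one_div_cancel hα.ne', one_mul, sub_sq,
    Real.sq_sqrt hR, Real.sq_sqrt (mul_nonneg (by linarith) hc.le)]
  ring

lemma one_sub_add_mul_peakOffset (hα : α ≠ 0) :
    1 - α + α * peakOffset α c R = peakDenom α c R := by
  rw [peakOffset, mul_div_cancel₀ _ hα]
  ring

lemma peakOffset_mem_Icc (hα : 0 < α) (hα1 : α < 1)
    (hlo : 1 - α ≤ R / c) (hhi : R / c ≤ 1 / (1 - α)) : peakOffset α c R ∈ Icc 0 1 := by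
  have h1α : 0 < 1 - α := by linarith
  have hlo' : 1 - α ≤ peakDenom α c R := by
    refine Real.le_sqrt_of_sq_le ?_
    rw [mul_div_assoc, sq]
    exact mul_le_mul_of_nonneg_left hlo h1α.le
  have hhi' : peakDenom α c R ≤ 1 := by
    refine Real.sqrt_le_one.2 ?_
    rw [mul_div_assoc]
    calc (1 - α) * (R / c) ≤ (1 - α) * (1 / (1 - α)) := mul_le_mul_of_nonneg_left hhi h1α.le
      _ = 1 := mul_one_div_cancel h1α.ne'
  constructor
  · exact div_nonneg (by linarith) hα.le
  · rw [peakOffset, div_le_one hα]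
    linarith

lemma Gb_eq_peakValue_sub (hα : 0 < α) (hα1 : α < 1) (hc : 0 < c) (hR : 0 ≤ R)
    (h : x ∈ Icc b (b + 1)) :
    Gb α c R b x = peakValue α c R - b * c
      - c / α * ((1 - α + α * (x - b) - peakDenom α c R) ^ 2 / (1 - α + α * (x - b))) := by
  have hd : 0 < 1 - α + α * (x - b) := by nlinarith [h.1]
  have hv := mul_peakValue hα hα1.le hc hR
  have hs := mul_sq_peakDenom (α := α) hα1.le hc hR
  rw [Gb_of_mem_Icc h]
  generalize hd_def : 1 - α + α * (x - b) = d at hd ⊢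
  field_simp
  linear_combination hs - d * hv + (R - c * d) * hd_def

section Bounds

variable (hα : 0 < α) (hα1 : α < 1) (hc : 0 < c) (hR : 0 ≤ R)
include hα hα1 hc hR

lemma Gb_le_peakValue_sub (hx : b ≤ x) : Gb α c R b x ≤ peakValue α c R - b * c := by
  have hmid : ∀ z ∈ Icc b (b + 1), Gb α c R b z ≤ peakValue α c R - b * c := fun z hz => by
    have hd : 0 < 1 - α + α * (z - b) := by nlinarith [hz.1]
    rw [Gb_eq_peakValue_sub hα hα1 hc hR hz, sub_le_self_iff]
    positivity
  rcases le_total x (b + 1) with h | h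
  · exact hmid x ⟨hx, h⟩
  · calc Gb α c R b x = R - c * x := Gb_of_add_one_le h
      _ ≤ R - c * (b + 1) := by gcongr
      _ = Gb α c R b (b + 1) := (Gb_of_add_one_le le_rfl).symm
      _ ≤ peakValue α c R - b * c := hmid _ ⟨by linarith, le_rfl⟩

lemma Gb_le_max (hxz : x ≤ z) : Gb α c R b z ≤ max (-c * x) (peakValue α c R - b * c) := by
  rcases lt_or_ge z b with h | h
  · rw [Gb_of_lt h]
    exact le_max_of_le_left (mul_le_mul_of_nonpos_left hxz (by linarith))
  · exact le_max_of_le_right (Gb_le_peakValue_sub hα hα1 hc hR h)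

variable (hlo : 1 - α ≤ R / c) (hhi : R / c ≤ 1 / (1 - α))
include hlo hhi

lemma Gb_add_peakOffset : Gb α c R b (b + peakOffset α c R) = peakValue α c R - b * c := by
  obtain ⟨h₀, h₁⟩ := peakOffset_mem_Icc hα hα1 hlo hhi
  rw [Gb_eq_peakValue_sub hα hα1 hc hR ⟨by linarith, by linarith⟩, add_sub_cancel_left,
    one_sub_add_mul_peakOffset hα.ne', sub_self]
  simp

lemma antitoneOn_Gb_Ici_add_peakOffset :
    AntitoneOn (Gb α c R b) (Ici (b + peakOffset α c R)) := by
  obtain ⟨h₀, h₁⟩ := peakOffset_mem_Icc hα hα1 hlo hhi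
  have hpeak := one_sub_add_mul_peakOffset (c := c) (R := R) hα.ne'
  rw [← Icc_union_Ici_eq_Ici (by linarith : b + peakOffset α c R ≤ b + 1)]
  refine AntitoneOn.union_right ?_ ?_ (isGreatest_Icc (by linarith)) isLeast_Ici
  · intro x hx y hy hxy
    have hsx : peakDenom α c R ≤ 1 - α + α * (x - b) := by nlinarith [hx.1]
    rw [Gb_eq_peakValue_sub hα hα1 hc hR ⟨by linarith [hx.1], hx.2⟩,
      Gb_eq_peakValue_sub hα hα1 hc hR ⟨by linarith [hy.1], hy.2⟩]
    refine sub_le_sub_left (mul_le_mul_of_nonneg_left ?_ (by positivity)) _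
    exact sq_sub_div_le_sq_sub_div (Real.sqrt_nonneg _) hsx (by nlinarith) (by nlinarith [hx.1])
  · intro x hx y hy hxy
    rw [Gb_of_add_one_le hx, Gb_of_add_one_le hy]
    gcongr

lemma csSup_image_Ici_Gb_of_le_add_peakOffset (hx : x ≤ b + peakOffset α c R) :
    sSup (Gb α c R b '' Ici x) = max (-c * x) (peakValue α c R - b * c) := by
  refine IsGreatest.csSup_eq ⟨?_, forall_mem_image.2 fun z hz => Gb_le_max hα hα1 hc hR hz⟩
  rcases lt_or_ge (peakValue α c R - b * c) (-c * x) with h | h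
  · have hxb : x < b := by
      by_contra! hbx
      nlinarith [peakValue_nonneg hα (c := c) (R := R)]
    rw [max_eq_left h.le]
    exact ⟨x, self_mem_Ici, Gb_of_lt hxb⟩
  · rw [max_eq_right h]
    exact ⟨_, hx, Gb_add_peakOffset hα hα1 hc hR hlo hhi⟩

end Bounds

end Profile

theorem sup_Gb_piecewise_general
    (α c R b : ℝ) (hα0 : 0 < α) (hα1 : α < 1) (hc : 0 < c) (hR : 0 < R)
    (hlo : 1 - α ≤ R / c) (hhi : R / c ≤ 1 / (1 - α)) :
    ∀ x : ℝ,
      (x < b - (Real.sqrt (R / (α * c)) - Real.sqrt ((1 - α) / α)) ^ 2 →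
        sSup (Gb α c R b '' {z | x ≤ z}) = -c * x) ∧
      (b - (Real.sqrt (R / (α * c)) - Real.sqrt ((1 - α) / α)) ^ 2 ≤ x →
        x < b - (1 - α) / α + Real.sqrt ((1 - α) * R / (α ^ 2 * c)) →
        sSup (Gb α c R b '' {z | x ≤ z})
          = (1 / α) * (Real.sqrt R - Real.sqrt ((1 - α) * c)) ^ 2 - b * c) ∧
      (b - (1 - α) / α + Real.sqrt ((1 - α) * R / (α ^ 2 * c)) ≤ x → x < b + 1 →
        sSup (Gb α c R b '' {z | x ≤ z})
          = -c * x + R * (x - b) / (1 - α + α * (x - b))) ∧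
      (b + 1 ≤ x → sSup (Gb α c R b '' {z | x ≤ z}) = R - c * x) := by
  intro x
  obtain ⟨hpeak₀, hpeak₁⟩ := peakOffset_mem_Icc hα0 hα1 hlo hhi
  have hanti := antitoneOn_Gb_Ici_add_peakOffset hα0 hα1 hc hR.le hlo hhi (b := b)
  have hsup_of_le_peak :=
    csSup_image_Ici_Gb_of_le_add_peakOffset hα0 hα1 hc hR.le hlo hhi (b := b) (x := x)
  have hsup_of_peak_le :
      ∀ y, b + peakOffset α c R ≤ y → sSup (Gb α c R b '' Ici y) = Gb α c R b y :=
    fun y hy => ((hanti.mono (Ici_subset_Ici.2 hy)).map_isLeast isLeast_Ici).csSup_eq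
  rw [sq_sqrt_sub_sqrt_eq_peakValue_div hα0 hα1.le hc hR.le,
    sub_div_add_sqrt_eq_add_peakOffset hα0]
  refine ⟨fun h₁ => ?_, fun h₁ h₂ => ?_, fun h₁ h₂ => ?_, fun h₁ => ?_⟩
  · have hpv : 0 ≤ peakValue α c R / c := div_nonneg (peakValue_nonneg hα0) hc.le
    have hx : x ≤ b + peakOffset α c R := by linarith
    rw [lt_sub_comm, div_lt_iff₀ hc] at h₁
    exact (hsup_of_le_peak hx).trans (max_eq_left (by linarith))
  · rw [sub_le_comm, le_div_iff₀ hc] at h₁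
    exact (hsup_of_le_peak h₂.le).trans (max_eq_right (by linarith))
  · exact (hsup_of_peak_le x h₁).trans (Gb_of_mem_Icc ⟨by linarith, h₂.le⟩)
  · exact (hsup_of_peak_le x (by linarith)).trans (Gb_of_add_one_le h₁)

/-- Let `α ∈ (0,1)`, `c > 0`, `R > 0` with
`1 − α ≤ R/c ≤ 1/(1−α)`, and `b ≥ 0`.  Then for every `x ∈ ℝ` the value
`U^{b,*}(x) = sup_{z ≥ x} G^b(z)` is given by the explicit piecewise formula:
`−c·x` for `x < b − (√(R/(αc)) − √((1−α)/α))²`;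
`(1/α)(√R − √((1−α)c))² − b·c` on the next interval up to
`b − (1−α)/α + √((1−α)R/(α²c))`; `G^b(x)` from there up to `b+1`;
and `R − c·x` for `x ≥ b+1`. -/
theorem sup_Gb_piecewise
    (α c R b : ℝ) (hα0 : 0 < α) (hα1 : α < 1) (hc : 0 < c) (hR : 0 < R)
    (hlo : 1 - α ≤ R / c) (hhi : R / c ≤ 1 / (1 - α)) (hb : 0 ≤ b) :
    ∀ x : ℝ,
      (x < b - (Real.sqrt (R / (α * c)) - Real.sqrt ((1 - α) / α)) ^ 2 →
        sSup (Gb α c R b '' {z | x ≤ z}) = -c * x) ∧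
      (b - (Real.sqrt (R / (α * c)) - Real.sqrt ((1 - α) / α)) ^ 2 ≤ x →
        x < b - (1 - α) / α + Real.sqrt ((1 - α) * R / (α ^ 2 * c)) →
        sSup (Gb α c R b '' {z | x ≤ z})
          = (1 / α) * (Real.sqrt R - Real.sqrt ((1 - α) * c)) ^ 2 - b * c) ∧
      (b - (1 - α) / α + Real.sqrt ((1 - α) * R / (α ^ 2 * c)) ≤ x → x < b + 1 →
        sSup (Gb α c R b '' {z | x ≤ z})
          = -c * x + R * (x - b) / (1 - α + α * (x - b))) ∧
      (b + 1 ≤ x → sSup (Gb α c R b '' {z | x ≤ z}) = R - c * x) :=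
  sup_Gb_piecewise_general α c R b hα0 hα1 hc hR hlo hhi
end

section
/- Assume R/c < 1 − α, and let b, b' ≥ 0 be arbitrary. Define U : [0,∞) → ℝ by U(x) = −c·x + R·p_{b'}(x) for 0 ≤ x < b; U(x) = −c·x + R·[(1−α)·p_{b'}(x) + α·(x − b)]/(1 − α + α·(x − b)) for b ≤ x < b+1; and U(x) = −c·x + (α + (1−α)·p_{b'}(x))·R for x ≥ b+1. Then U is strictly decreasing on [0,∞). Hence no two-step dynamic audit (a test with entrance value b' followed by a static audit with entrance value b) can incentivize a positive investment from a vendor with R/c < 1 − α. -/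
/-!
Write the passing probability of the two-step audit as
`1 - (1 - α) (1 - p_{b'} x) / (1 - α + α p_b x)`; this single formula covers all three pieces
of `U`, so `U x = -c x + R · pass x`. Since `p_b, p_{b'}` are monotone, bounded by `1` and
`1`-Lipschitz, and the denominator lies in `[1 - α, 1]`, the passing probability grows with
slope at most `1 / (1 - α)`. The marginal reward is thus at most `R / (1 - α) < c`.
-/

/-- The truncated-linear test with entrance value `b`. -/
noncomputable def pb (b : ℝ) : ℝ → ℝ := fun x =>
  if x < b then 0 else if x < b + 1 then x - b else 1

namespace pb

variable (b : ℝ)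

lemma nonneg (x : ℝ) : 0 ≤ pb b x := by
  simp only [pb]; split_ifs <;> linarith

lemma le_one (x : ℝ) : pb b x ≤ 1 := by
  simp only [pb]; split_ifs <;> linarith

lemma monotone : Monotone (pb b) := by
  intro x y h
  simp only [pb]; split_ifs <;> linarith

lemma sub_le_of_le {x y : ℝ} (h : x ≤ y) : pb b y - pb b x ≤ y - x := by
  simp only [pb]; split_ifs <;> linarith

end pb

noncomputable def twoStepPass (α b b' x : ℝ) : ℝ :=
  1 - (1 - α) * (1 - pb b' x) / (1 - α + α * pb b x)

section twoStepPass

variable {α : ℝ} (hα0 : 0 < α) (hα1 : α < 1) (b b' : ℝ)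
include hα0 hα1

lemma twoStepPass_sub_le {x y : ℝ} (hxy : x ≤ y) :
    twoStepPass α b b' y - twoStepPass α b b' x ≤ (1 - α)⁻¹ * (y - x) := by
  simp only [twoStepPass]
  set P := pb b' x
  set Q := pb b' y
  set Dx := 1 - α + α * pb b x
  set Dy := 1 - α + α * pb b y
  have h1α : 0 < 1 - α := by linarith
  have hDx : 1 - α ≤ Dx := by have := pb.nonneg b x; nlinarith
  have hDy : 1 - α ≤ Dy := by have := pb.nonneg b y; nlinarith
  have hDx0 : Dx ≠ 0 := by linarith
  have hDy0 : Dy ≠ 0 := by linarith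
  have hDxy : 0 ≤ Dy - Dx := by have := pb.monotone b hxy; nlinarith
  have hDxy' : Dy - Dx ≤ α * (y - x) := by have := pb.sub_le_of_le b hxy; nlinarith
  have hP : 0 ≤ 1 - P := by linarith [pb.le_one b' x]
  have hQP : Q - P ≤ y - x := pb.sub_le_of_le b' hxy
  have hsplit : 1 - (1 - α) * (1 - Q) / Dy - (1 - (1 - α) * (1 - P) / Dx)
      = (1 - α) * ((1 - P) * (Dy - Dx) / (Dx * Dy) + (Q - P) / Dy) := by
    field_simp
    ring
  have hden : (1 - P) * (Dy - Dx) / (Dx * Dy) ≤ α * (y - x) / (1 - α) ^ 2 := by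
    refine div_le_div₀ (by nlinarith) ?_ (by positivity) (by rw [sq]; gcongr; linarith)
    nlinarith [pb.nonneg b' x]
  have hnum : (Q - P) / Dy ≤ (y - x) / (1 - α) :=
    div_le_div₀ (by linarith) hQP h1α hDy
  calc 1 - (1 - α) * (1 - Q) / Dy - (1 - (1 - α) * (1 - P) / Dx)
      ≤ (1 - α) * (α * (y - x) / (1 - α) ^ 2 + (y - x) / (1 - α)) := by
        rw [hsplit]; gcongr
    _ = (1 - α)⁻¹ * (y - x) := by field_simp; ring

end twoStepPass

lemma strictAnti_neg_mul_add_mul {g : ℝ → ℝ} {L c R : ℝ} (hR : 0 ≤ R) (hRL : R * L < c)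
    (hg : ∀ x y, x ≤ y → g y - g x ≤ L * (y - x)) :
    StrictAnti fun x => -c * x + R * g x := by
  intro x y hxy
  have hpos : 0 < y - x := sub_pos.2 hxy
  have := mul_le_mul_of_nonneg_left (hg x y hxy.le) hR
  nlinarith

lemma twoStepUtility_eq (α b b' c R x : ℝ) (hα0 : 0 < α) (hα1 : α < 1) :
    (if x < b then -c * x + R * pb b' x
      else if x < b + 1 then
        -c * x + R * ((1 - α) * pb b' x + α * (x - b)) / (1 - α + α * (x - b))
      else -c * x + (α + (1 - α) * pb b' x) * R)
      = -c * x + R * twoStepPass α b b' x := by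
  have h1α : (1 : ℝ) - α ≠ 0 := by linarith
  rw [twoStepPass]
  generalize pb b' x = P
  simp only [pb]
  split_ifs with hb hb1
  · rw [mul_zero, add_zero, mul_div_cancel_left₀ _ h1α]; ring
  · have : 1 - α + α * (x - b) ≠ 0 := by nlinarith
    field_simp; ring
  · field_simp; ring

theorem dynamic_no_incentive_low_RoSI_general
    (α c R : ℝ) (hα0 : 0 < α) (hα1 : α < 1) (hc : 0 < c) (hR : 0 ≤ R)
    (hlow : R / c < 1 - α)
    (b b' : ℝ) :
    StrictAntiOn
      (fun x =>
        if x < b then -c * x + R * pb b' x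
        else if x < b + 1 then
          -c * x + R * ((1 - α) * pb b' x + α * (x - b)) / (1 - α + α * (x - b))
        else -c * x + (α + (1 - α) * pb b' x) * R)
      (Set.Ici 0) := by
  have h1α : 0 < 1 - α := by linarith
  have hRL : R * (1 - α)⁻¹ < c := by
    rw [← div_eq_mul_inv, div_lt_iff₀ h1α]
    rwa [div_lt_iff₀ hc, mul_comm] at hlow
  simp only [twoStepUtility_eq α b b' c R _ hα0 hα1]
  exact (strictAnti_neg_mul_add_mul hR hRL fun _ _ =>
    twoStepPass_sub_le hα0 hα1 b b').strictAntiOn _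

/-- Let `α ∈ (0,1)`, `c > 0`, `R ≥ 0` with `R/c < 1 − α`,
and `b, b' ≥ 0`.  Define the two-step-audit utility
`U(x) = −c·x + R·p_{b'}(x)` for `0 ≤ x < b`;
`U(x) = −c·x + R·[(1−α)·p_{b'}(x) + α·(x−b)]/(1−α+α·(x−b))` for `b ≤ x < b+1`;
`U(x) = −c·x + (α + (1−α)·p_{b'}(x))·R` for `x ≥ b+1`.
Then `U` is strictly decreasing on `[0,∞)`: no two-step dynamic audit can
incentivize a positive investment from a vendor with `R/c < 1 − α`. -/
theorem dynamic_no_incentive_low_RoSI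
    (α c R : ℝ) (hα0 : 0 < α) (hα1 : α < 1) (hc : 0 < c) (hR : 0 ≤ R)
    (hlow : R / c < 1 - α)
    (b b' : ℝ) (hb : 0 ≤ b) (hb' : 0 ≤ b') :
    StrictAntiOn
      (fun x =>
        if x < b then -c * x + R * pb b' x
        else if x < b + 1 then
          -c * x + R * ((1 - α) * pb b' x + α * (x - b)) / (1 - α + α * (x - b))
        else -c * x + (α + (1 - α) * pb b' x) * R)
      (Set.Ici 0) :=
  dynamic_no_incentive_low_RoSI_general α c R hα0 hα1 hc hR hlow b b'
end

section
/- Assume R/c ≥ 1/(1−α), and let b, b' ∈ ℝ. Define U : ℝ → ℝ by U(x) = −c·x + R·p_{b'}(x) for x < b + 1 − R/c; U(x) = −c·x + (α + (1−α)·p_{b'}(x))·R + α·c·(1 − p_{b'}(x))·(x − b − 1) for b + 1 − R/c ≤ x < b + 1; and U(x) = −c·x + (α + (1−α)·p_{b'}(x))·R for x ≥ b + 1. Then U is nonincreasing on (−∞, b'), nondecreasing on [b', b'+1), and nonincreasing on [b'+1, ∞). -/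
lemma pb_lt' {b x : ℝ} (h : x < b) : pb b x = 0 := by simp [pb, h]

lemma pb_mid' {b x : ℝ} (h1 : b ≤ x) (h2 : x < b + 1) : pb b x = x - b := by
  simp [pb, not_lt.2 h1, h2]

lemma pb_ge' {b x : ℝ} (h : b + 1 ≤ x) : pb b x = 1 := by
  have h1 : ¬ x < b := by linarith
  have h2 : ¬ x < b + 1 := not_lt.2 h
  simp [pb, h1, h2]

set_option maxHeartbeats 2000000 in
/-- Let `α ∈ (0,1)`, `c > 0`, `R > 0` with `R/c ≥ 1/(1−α)`,
and `b, b' ∈ ℝ`.  Define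
`U(x) = −c·x + R·p_{b'}(x)` for `x < b + 1 − R/c`;
`U(x) = −c·x + (α + (1−α)·p_{b'}(x))·R + α·c·(1 − p_{b'}(x))·(x − b − 1)`
for `b + 1 − R/c ≤ x < b + 1`; and
`U(x) = −c·x + (α + (1−α)·p_{b'}(x))·R` for `x ≥ b + 1`.
Then `U` is nonincreasing on `(−∞, b')`, nondecreasing on `[b', b'+1)`, and
nonincreasing on `[b'+1, ∞)`. -/
theorem dynamic_monotonicity_high_RoSI
    (α c R : ℝ) (hα0 : 0 < α) (hα1 : α < 1) (hc : 0 < c) (hR : 0 < R)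
    (hhi : 1 / (1 - α) ≤ R / c) (b b' : ℝ) :
    AntitoneOn
      (fun x =>
        if x < b + 1 - R / c then -c * x + R * pb b' x
        else if x < b + 1 then
          -c * x + (α + (1 - α) * pb b' x) * R + α * c * (1 - pb b' x) * (x - b - 1)
        else -c * x + (α + (1 - α) * pb b' x) * R)
      (Set.Iio b') ∧
    MonotoneOn
      (fun x =>
        if x < b + 1 - R / c then -c * x + R * pb b' x
        else if x < b + 1 then
          -c * x + (α + (1 - α) * pb b' x) * R + α * c * (1 - pb b' x) * (x - b - 1)
        else -c * x + (α + (1 - α) * pb b' x) * R)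
      (Set.Ico b' (b' + 1)) ∧
    AntitoneOn
      (fun x =>
        if x < b + 1 - R / c then -c * x + R * pb b' x
        else if x < b + 1 then
          -c * x + (α + (1 - α) * pb b' x) * R + α * c * (1 - pb b' x) * (x - b - 1)
        else -c * x + (α + (1 - α) * pb b' x) * R)
      (Set.Ici (b' + 1)) := by
  have ha : (0:ℝ) < 1 - α := by linarith
  have hkey : c ≤ (1 - α) * R := by
    rw [div_le_div_iff₀ ha hc] at hhi; linarith
  have hRc : 0 ≤ R - c := by nlinarith [mul_pos hα0 hR]
  obtain ⟨s, hs⟩ : ∃ s : ℝ, s = R / c := ⟨_, rfl⟩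
  rw [← hs]
  have hsc : c * s = R := by rw [hs]; field_simp
  refine ⟨?_, ?_, ?_⟩
  · intro x hx y hy hxy
    simp only [Set.mem_Iio] at hx hy
    simp only [pb_lt' hx, pb_lt' hy]
    split_ifs with h1 h2 h3 h4 h5 h6 <;>
      nlinarith [mul_pos hα0 hc, mul_pos hα0 hR, mul_pos ha hc, mul_pos ha hR, hsc, hkey,
        mul_nonneg (mul_pos ha hc).le (sub_nonneg.2 hxy)]
  · intro x hx y hy hxy
    obtain ⟨hx1, hx2⟩ := hx
    obtain ⟨hy1, hy2⟩ := hy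
    simp only [pb_mid' hx1 hx2, pb_mid' hy1 hy2]
    have hxy' : (0:ℝ) ≤ y - x := by linarith
    split_ifs
    all_goals try (exfalso; linarith)
    · -- both in piece 1
      nlinarith [mul_nonneg hxy' hRc]
    · -- x in piece 1, y in piece 2
      nlinarith [mul_nonneg hxy' hRc,
        mul_nonneg (mul_nonneg hα0.le (show (0:ℝ) ≤ b' + 1 - y by linarith))
          (show (0:ℝ) ≤ R + c * (y - b - 1) by nlinarith [hsc])]
    · -- x in piece 1, y in piece 3
      nlinarith [mul_nonneg hxy' hRc,
        mul_nonneg (mul_pos hα0 hR).le (show (0:ℝ) ≤ b' + 1 - y by linarith)]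
    · -- both in piece 2
      nlinarith [mul_nonneg hxy' (show (0:ℝ) ≤ (1 - α) * R - c by linarith),
        mul_nonneg (mul_nonneg (mul_pos hα0 hc).le hxy')
          (show (0:ℝ) ≤ b + b' + 2 - x - y by linarith)]
    · -- x in piece 2, y in piece 3
      nlinarith [mul_nonneg hxy' (show (0:ℝ) ≤ (1 - α) * R - c by linarith),
        mul_nonneg (mul_pos hα0 hc).le
          (mul_nonneg (show (0:ℝ) ≤ b' + 1 - x by linarith)
            (show (0:ℝ) ≤ b + 1 - x by linarith))]
    · -- both in piece 3
      nlinarith [mul_nonneg hxy' (show (0:ℝ) ≤ (1 - α) * R - c by linarith)]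
  · intro x hx y hy hxy
    simp only [Set.mem_Ici] at hx hy
    simp only [pb_ge' hx, pb_ge' hy]
    split_ifs <;> nlinarith [hc.le, mul_nonneg hc.le (sub_nonneg.2 hxy)]
end

section
/- Assume 1 < R/c < 1/(1−α). Set b̄ := R/c + (√(R/(α·c)) − √((1−α)/α))² and b̄' := R/c − 1, and define the two-step-audit utility U(x) := −(1 − α + α·p_{b̄'}(x))·c·x + p_{b̄'}(x)·R + α·(1 − p_{b̄'}(x))·sup_{z ≥ x} G^{b̄}(z) for x ≥ 0. Then U(R/c) = 0 and U(x) ≤ 0 for every x ≥ 0; that is, x = R/c (the investment capacity) is a global maximizer of U over [0,∞), so this dynamic audit (an easier first test followed by an infinite sequence of harder ones) incentivizes the investment R/c. -/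
/-- The two-step-audit utility: a first (one-shot) test with entrance value `b'`
followed by a static audit with entrance value `b`:
`U(x) := −(1−α+α·p_{b'}(x))·c·x + p_{b'}(x)·R + α·(1−p_{b'}(x))·sup_{z ≥ x} G^b(z)`. -/
noncomputable def twoStepU (α c R b b' : ℝ) (x : ℝ) : ℝ :=
  -(1 - α + α * pb b' x) * (c * x) + pb b' x * R
    + α * (1 - pb b' x) * sSup (Gb α c R b '' {z | x ≤ z})

/-- The key algebraic inequality: `R·t ≤ c·(t + D²)·(1 − α + α·t)` where
`D = √(R/(αc)) − √((1−α)/α)`. -/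
lemma key_ineq (α c R : ℝ) (hα0 : 0 < α) (hα1 : α < 1) (hc : 0 < c) (hR : 0 < R) :
    ∀ t : ℝ, R * t ≤
      c * (t + (Real.sqrt (R / (α * c)) - Real.sqrt ((1 - α) / α)) ^ 2) * (1 - α + α * t) := by
  intro t
  set a := Real.sqrt α with haa
  set b := Real.sqrt (1 - α) with hbb
  set D := Real.sqrt (R / (α * c)) - Real.sqrt ((1 - α) / α) with hD
  have ha : a ^ 2 = α := Real.sq_sqrt hα0.le
  have hb : b ^ 2 = 1 - α := Real.sq_sqrt (by linarith)
  have h1 : a * Real.sqrt (R / (α * c)) = Real.sqrt (R / c) := by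
    rw [haa, ← Real.sqrt_mul hα0.le]
    congr 1
    field_simp
  have h2 : a * Real.sqrt ((1 - α) / α) = b := by
    rw [haa, hbb, ← Real.sqrt_mul hα0.le]
    congr 1
    field_simp
  have h3 : a * D + b = Real.sqrt (R / c) := by
    rw [hD, mul_sub, h1, h2]; ring
  have h4 : (a * D + b) ^ 2 = R / c := by
    rw [h3, Real.sq_sqrt (by positivity)]
  have hR' : R = c * (a * D + b) ^ 2 := by
    rw [h4]; field_simp
  have goal_eq : c * (t + D ^ 2) * (1 - α + α * t) - R * t = c * (a * t - b * D) ^ 2 := by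
    rw [hR', ← hb, ← ha]; ring
  nlinarith [mul_nonneg hc.le (sq_nonneg (a * t - b * D)), goal_eq]

/-- Let `α ∈ (0,1)`, `c > 0`, `R > 0` with `1 < R/c < 1/(1−α)`.
Set `b̄ := R/c + (√(R/(αc)) − √((1−α)/α))²` and `b̄' := R/c − 1`.  Then the
two-step-audit utility `U` satisfies `U(R/c) = 0` and `U(x) ≤ 0` for every
`x ≥ 0`: the investment capacity `R/c` is a global maximizer of `U` over
`[0,∞)`, so this dynamic audit incentivizes the investment `R/c`. -/
theorem dynamic_audit_incentivizes_capacity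
    (α c R : ℝ) (hα0 : 0 < α) (hα1 : α < 1) (hc : 0 < c) (hR : 0 < R)
    (hlo : 1 < R / c) (hhi : R / c < 1 / (1 - α)) :
    twoStepU α c R (R / c + (Real.sqrt (R / (α * c)) - Real.sqrt ((1 - α) / α)) ^ 2)
        (R / c - 1) (R / c) = 0 ∧
    ∀ x, 0 ≤ x →
      twoStepU α c R (R / c + (Real.sqrt (R / (α * c)) - Real.sqrt ((1 - α) / α)) ^ 2)
        (R / c - 1) x ≤ 0 := by
  have hKey := key_ineq α c R hα0 hα1 hc hR
  set D := Real.sqrt (R / (α * c)) - Real.sqrt ((1 - α) / α) with hDdef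
  set K := R / c with hKdef
  have hKc : c * K = R := by rw [hKdef]; field_simp
  have hcR : c < R := by
    have := (one_lt_div hc).mp hlo; linarith
  have hD0 : 0 < D := by
    rw [hDdef]
    have h : (1 - α) / α < R / (α * c) := by
      rw [div_lt_div_iff₀ hα0 (by positivity)]
      nlinarith [mul_pos hα0 hc, mul_pos hα0 (sub_pos.mpr hcR)]
    exact sub_pos.mpr (Real.sqrt_lt_sqrt (div_nonneg (by linarith) hα0.le) h)
  have hD2 : 0 < D ^ 2 := pow_pos hD0 2
  -- the sup of Gb over {z | x ≤ z} equals -c*x whenever x ≤ K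
  have hSup : ∀ x : ℝ, x ≤ K → sSup (Gb α c R (K + D ^ 2) '' {z | x ≤ z}) = -c * x := by
    intro x hx
    have hxb : x < K + D ^ 2 := by linarith
    apply IsGreatest.csSup_eq
    constructor
    · refine ⟨x, le_refl x, ?_⟩
      simp only [Gb]
      rw [if_pos hxb]
    · rintro y ⟨z, hz, rfl⟩
      simp only [Set.mem_setOf_eq] at hz
      have hcx : c * x ≤ R := by nlinarith
      simp only [Gb]
      split_ifs with h1 h2
      · nlinarith [mul_le_mul_of_nonneg_left hz hc.le]
      · push_neg at h1
        have ht0 : 0 ≤ z - (K + D ^ 2) := by linarith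
        have hd : 0 < 1 - α + α * (z - (K + D ^ 2)) := by nlinarith
        have hdiv : R * (z - (K + D ^ 2)) / (1 - α + α * (z - (K + D ^ 2))) ≤
            c * (z - (K + D ^ 2)) + c * D ^ 2 := by
          rw [div_le_iff₀ hd]
          nlinarith [hKey (z - (K + D ^ 2))]
        nlinarith [hdiv, hcx, hKc]
      · push_neg at h1 h2
        -- z ≥ K + D^2 + 1, goal : R - c*z ≤ -c*x
        have h5 := hKey 1
        have h6 : c * (K + D ^ 2 + 1) ≤ c * z := by
          apply mul_le_mul_of_nonneg_left h2 hc.le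
        nlinarith [h5, h6, hcx, hKc]
  constructor
  · -- U(K) = 0
    have hp : pb (K - 1) K = 1 := by
      unfold pb
      rw [if_neg (not_lt.mpr (by linarith)), if_neg (not_lt.mpr (by linarith))]
    unfold twoStepU
    rw [hp]
    linear_combination (-1 : ℝ) * hKc
  · intro x hx
    rcases lt_or_ge x K with h | h
    · -- x < K : sup is -c*x
      have hS := hSup x h.le
      unfold twoStepU
      rw [hS]
      rcases lt_or_ge x (K - 1) with h' | h'
      · have hp : pb (K - 1) x = 0 := by
          unfold pb; rw [if_pos h']
        rw [hp]
        nlinarith [mul_nonneg hc.le hx]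
      · have hp : pb (K - 1) x = x - (K - 1) := by
          unfold pb
          rw [if_neg (not_lt.mpr h'), if_pos (by linarith)]
        rw [hp, ← hKc]
        have hprod : 0 ≤ c * (K - 1) * (K - x) :=
          mul_nonneg (mul_nonneg hc.le (by linarith)) (by linarith)
        nlinarith [hprod]
    · -- K ≤ x : p = 1, sup coefficient is 0
      have hp : pb (K - 1) x = 1 := by
        unfold pb
        rw [if_neg (not_lt.mpr (by linarith)), if_neg (not_lt.mpr (by linarith))]
      unfold twoStepU
      rw [hp]
      have h6 : c * K ≤ c * x := mul_le_mul_of_nonneg_left h hc.le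
      linarith [h6, hKc]
end

section
/- Let b, b' ∈ ℝ with b' ≥ b. Define h(x) := −c·x + R·(x − (1−α)·b' − α·b)/(1 − α + α·(x − b)) on the domain x > b − (1−α)/α, and set x̄_h := b − (1−α)/α + √((1−α)·R/(α²·c) + (1−α)·R·(b' − b)/(α·c)). Then h is strictly increasing on (b − (1−α)/α, x̄_h], strictly decreasing on [x̄_h, ∞), and h(x̄_h) = −c·(b − (1−α)/α − R/(α·c) + 2·√((1−α)·R/(α²·c) + (1−α)·R·(b' − b)/(α·c))). -/
/-- Let `α ∈ (0,1)`, `c > 0`, `R > 0` and `b, b' ∈ ℝ` with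
`b' ≥ b`.  Define `h(x) := −c·x + R·(x − (1−α)·b' − α·b)/(1 − α + α·(x − b))`
on `x > b − (1−α)/α`, and set
`x̄_h := b − (1−α)/α + √((1−α)·R/(α²·c) + (1−α)·R·(b'−b)/(α·c))`.
Then `h` is strictly increasing on `(b − (1−α)/α, x̄_h]`, strictly decreasing on
`[x̄_h, ∞)`, and
`h(x̄_h) = −c·(b − (1−α)/α − R/(α·c) + 2·√((1−α)·R/(α²·c) + (1−α)·R·(b'−b)/(α·c)))`. -/
theorem h_shape
    (α c R b b' : ℝ) (hα0 : 0 < α) (hα1 : α < 1) (hc : 0 < c) (hR : 0 < R)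
    (hbb : b ≤ b') :
    StrictMonoOn
      (fun x => -c * x + R * (x - (1 - α) * b' - α * b) / (1 - α + α * (x - b)))
      (Set.Ioc (b - (1 - α) / α)
        (b - (1 - α) / α
          + Real.sqrt ((1 - α) * R / (α ^ 2 * c) + (1 - α) * R * (b' - b) / (α * c)))) ∧
    StrictAntiOn
      (fun x => -c * x + R * (x - (1 - α) * b' - α * b) / (1 - α + α * (x - b)))
      (Set.Ici
        (b - (1 - α) / α
          + Real.sqrt ((1 - α) * R / (α ^ 2 * c) + (1 - α) * R * (b' - b) / (α * c)))) ∧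
    (fun x => -c * x + R * (x - (1 - α) * b' - α * b) / (1 - α + α * (x - b)))
        (b - (1 - α) / α
          + Real.sqrt ((1 - α) * R / (α ^ 2 * c) + (1 - α) * R * (b' - b) / (α * c)))
      = -c * (b - (1 - α) / α - R / (α * c)
          + 2 * Real.sqrt ((1 - α) * R / (α ^ 2 * c) + (1 - α) * R * (b' - b) / (α * c))) := by
  have hα : α ≠ 0 := hα0.ne'
  have hc' : c ≠ 0 := hc.ne'
  have h1α : (0:ℝ) < 1 - α := by linarith
  set L := b - (1 - α) / α with hL
  set S := (1 - α) * R / (α ^ 2 * c) + (1 - α) * R * (b' - b) / (α * c) with hS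
  have hS0 : 0 < S := by
    have h1 : 0 < (1 - α) * R / (α ^ 2 * c) := by positivity
    have h2 : 0 ≤ (1 - α) * R * (b' - b) / (α * c) := by
      have : 0 ≤ b' - b := by linarith
      positivity
    rw [hS]
    exact add_pos_of_pos_of_nonneg h1 h2
  have hs : 0 < Real.sqrt S := Real.sqrt_pos.mpr hS0
  have hss : Real.sqrt S * Real.sqrt S = S := Real.mul_self_sqrt hS0.le
  have hform : ∀ x, L < x →
      (-c * x + R * (x - (1 - α) * b' - α * b) / (1 - α + α * (x - b)))
        = -c * x + R / α - (c * S) / (x - L) := by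
    intro x hx
    have hxL : (0:ℝ) < x - (b - (1 - α) / α) := by rw [hL] at hx; linarith
    have hden : 1 - α + α * (x - b) = α * (x - (b - (1 - α) / α)) := by
      field_simp; ring
    have hA : x - (1 - α) * b' - α * b
        = (x - (b - (1 - α) / α)) - ((1 - α) * (b' - b) + (1 - α) / α) := by
      field_simp; ring
    have haux : ∀ t : ℝ, t ≠ 0 →
        R * (t - ((1 - α) * (b' - b) + (1 - α) / α)) / (α * t)
          = R / α - (R * ((1 - α) * (b' - b) + (1 - α) / α) / α) / t := by
      intro t ht
      field_simp
    have hcs : R * ((1 - α) * (b' - b) + (1 - α) / α) / α = c * S := by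
      rw [hS]; field_simp; ring
    rw [hden, hA, haux _ hxL.ne', hcs, hL]
    ring
  have key : ∀ x y, L < x → L < y →
      (-c * y + R / α - (c * S) / (y - L)) - (-c * x + R / α - (c * S) / (x - L))
        = (y - x) * c * (S - (x - L) * (y - L)) / ((x - L) * (y - L)) := by
    intro x y hx hy
    have hxL : (0:ℝ) < x - L := sub_pos.mpr hx
    have hyL : (0:ℝ) < y - L := sub_pos.mpr hy
    field_simp
    ring
  refine ⟨?_, ?_, ?_⟩
  · intro x hx y hy hxy
    have hxL : L < x := hx.1
    have hyL : L < y := lt_trans hxL hxy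
    simp only
    rw [hform x hxL, hform y hyL]
    have hd := key x y hxL hyL
    have hprod : (x - L) * (y - L) < S := by
      have hx2 : x - L < Real.sqrt S := by
        have : x < L + Real.sqrt S := lt_of_lt_of_le hxy hy.2
        linarith
      have hy2 : y - L ≤ Real.sqrt S := by
        have := hy.2; linarith
      nlinarith [hx2, hy2, hss, hs, sub_pos.mpr hxL, sub_pos.mpr hyL]
    have hpos : 0 < (y - x) * c * (S - (x - L) * (y - L)) / ((x - L) * (y - L)) := by
      apply div_pos
      · apply mul_pos (mul_pos (by linarith) hc); linarith
      · exact mul_pos (by linarith) (by linarith)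
    linarith [hd]
  · intro x hx y hy hxy
    have hxL : L < x := lt_of_lt_of_le (by linarith) hx
    have hyL : L < y := lt_trans hxL hxy
    simp only
    rw [hform x hxL, hform y hyL]
    have hd := key x y hxL hyL
    have hprod : S < (x - L) * (y - L) := by
      have hx2 : Real.sqrt S ≤ x - L := by
        have := hx; simp only [Set.mem_Ici] at this; linarith
      have hy2 : Real.sqrt S < y - L := by
        have := hy; simp only [Set.mem_Ici] at this; linarith
      nlinarith [hx2, hy2, hss, hs]
    have hneg : (y - x) * c * (S - (x - L) * (y - L)) / ((x - L) * (y - L)) < 0 := by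
      apply div_neg_of_neg_of_pos
      · apply mul_neg_of_pos_of_neg (mul_pos (by linarith) hc); linarith
      · exact mul_pos (by linarith) (by linarith)
    linarith [hd]
  · simp only
    rw [hform (L + Real.sqrt S) (by linarith)]
    have : L + Real.sqrt S - L = Real.sqrt S := by ring
    rw [this]
    have hdiv : c * S / Real.sqrt S = c * Real.sqrt S := by
      rw [mul_div_assoc, Real.div_sqrt]
    rw [hdiv]
    field_simp
    ring
end

section
/- Let m ∈ ℕ, and let p_n, q_n : [0,∞) → [0,1] (n ∈ ℕ) be test functions with q_n = p_n for all n ≠ m. Suppose U, V : ℕ × [0,∞) → ℝ satisfy, for all n and x ≥ 0, the recursions U_n(x) = −(1 − α + α·p_n(x))·C(x) + p_n(x)·R + α·(1 − p_n(x))·U*_{n+1}(x) and V_n(x) = −(1 − α + α·q_n(x))·C(x) + q_n(x)·R + α·(1 − q_n(x))·V*_{n+1}(x), where F*_n(x) := sup_{y ≥ x} F_n(y) and all suprema appearing are finite, and suppose U_n = V_n for every n > m. Assume the uniform bound 0 ≤ C(x) + U*_{m+1}(x) ≤ R for all x ≥ 0. Then: (i) if q_m(x) ≥ p_m(x) for all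 x ≥ 0, then V*_0(0) ≥ U*_0(0) (and if q_m ≤ p_m pointwise then V*_0(0) ≤ U*_0(0)); and (ii) |V*_0(0) − U*_0(0)| ≤ α^m · Δ · R, where Δ := sup_{x ≥ 0} |q_m(x) − p_m(x)|. -/
private lemma sup_mono_pt {f g : ℝ → ℝ} {x : ℝ} (hfg : ∀ y, x ≤ y → f y ≤ g y)
    (hg : BddAbove (g '' {y | x ≤ y})) :
    sSup (f '' {y | x ≤ y}) ≤ sSup (g '' {y | x ≤ y}) := by
  apply csSup_le (Set.Nonempty.image _ ⟨x, le_refl x⟩)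
  rintro a ⟨y, hy, rfl⟩
  exact (hfg y hy).trans (le_csSup hg ⟨y, hy, rfl⟩)

private lemma sup_sub_le {f g : ℝ → ℝ} {x D : ℝ}
    (h : ∀ y, x ≤ y → f y - g y ≤ D)
    (hg : BddAbove (g '' {y | x ≤ y})) :
    sSup (f '' {y | x ≤ y}) - sSup (g '' {y | x ≤ y}) ≤ D := by
  rw [sub_le_iff_le_add]
  apply csSup_le (Set.Nonempty.image _ ⟨x, le_refl x⟩)
  rintro a ⟨y, hy, rfl⟩
  have h2 := le_csSup hg ⟨y, hy, rfl⟩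
  have := h y hy
  linarith

private lemma sup_abs_diff {f g : ℝ → ℝ} {x D : ℝ}
    (h : ∀ y, x ≤ y → |f y - g y| ≤ D)
    (hf : BddAbove (f '' {y | x ≤ y})) (hg : BddAbove (g '' {y | x ≤ y})) :
    |sSup (f '' {y | x ≤ y}) - sSup (g '' {y | x ≤ y})| ≤ D := by
  rw [abs_sub_le_iff]
  constructor
  · exact sup_sub_le (fun y hy => (le_abs_self _).trans (h y hy)) hg
  · exact sup_sub_le (fun y hy => by
      have := h y hy; have := neg_abs_le (f y - g y); linarith) hf



/-- Let `α ∈ (0,1)`, `R > 0`, `C` a monotone nondecreasing cost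
function on `[0,∞)`, `m ∈ ℕ`, and test functions `p n, q n : [0,∞) → [0,1]` with
`q n = p n` for all `n ≠ m`.  Suppose `U, V` satisfy the one-step recursions
`U n x = −(1−α+α·pₙ(x))·C(x) + pₙ(x)·R + α·(1−pₙ(x))·U*_{n+1}(x)` (and similarly
for `V` with `q`), where `F*ₙ(x) := sup_{y ≥ x} Fₙ(y)` and all suprema are
finite, that `U n = V n` for all `n > m`, and the uniform bound
`0 ≤ C(x) + U*_{m+1}(x) ≤ R`.  Then: (i) if `q_m ≥ p_m` pointwise then
`V*₀(0) ≥ U*₀(0)` (and the reverse if `q_m ≤ p_m`); and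
(ii) `|V*₀(0) − U*₀(0)| ≤ α^m · Δ · R` where `Δ := sup_{x ≥ 0} |q_m(x) − p_m(x)|`. -/
theorem one_test_change_bound
    (α R : ℝ) (hα0 : 0 < α) (hα1 : α < 1) (hR : 0 < R)
    (C : ℝ → ℝ) (hC : ∀ x y, 0 ≤ x → x ≤ y → C x ≤ C y)
    (m : ℕ) (p q : ℕ → ℝ → ℝ)
    (hp0 : ∀ n x, 0 ≤ x → 0 ≤ p n x) (hp1 : ∀ n x, 0 ≤ x → p n x ≤ 1)
    (hq0 : ∀ n x, 0 ≤ x → 0 ≤ q n x) (hq1 : ∀ n x, 0 ≤ x → q n x ≤ 1)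
    (hqp : ∀ n, n ≠ m → ∀ x, 0 ≤ x → q n x = p n x)
    (U V : ℕ → ℝ → ℝ)
    (hUbdd : ∀ n x, 0 ≤ x → BddAbove (U n '' {y | x ≤ y}))
    (hVbdd : ∀ n x, 0 ≤ x → BddAbove (V n '' {y | x ≤ y}))
    (hU : ∀ n x, 0 ≤ x →
      U n x = -(1 - α + α * p n x) * C x + p n x * R
        + α * (1 - p n x) * sSup (U (n + 1) '' {y | x ≤ y}))
    (hV : ∀ n x, 0 ≤ x →
      V n x = -(1 - α + α * q n x) * C x + q n x * R
        + α * (1 - q n x) * sSup (V (n + 1) '' {y | x ≤ y}))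
    (hUV : ∀ n, m < n → ∀ x, 0 ≤ x → U n x = V n x)
    (hbound : ∀ x, 0 ≤ x →
      0 ≤ C x + sSup (U (m + 1) '' {y | x ≤ y}) ∧
      C x + sSup (U (m + 1) '' {y | x ≤ y}) ≤ R) :
    ((∀ x, 0 ≤ x → p m x ≤ q m x) →
      sSup (U 0 '' {y | (0 : ℝ) ≤ y}) ≤ sSup (V 0 '' {y | (0 : ℝ) ≤ y})) ∧
    ((∀ x, 0 ≤ x → q m x ≤ p m x) →
      sSup (V 0 '' {y | (0 : ℝ) ≤ y}) ≤ sSup (U 0 '' {y | (0 : ℝ) ≤ y})) ∧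
    |sSup (V 0 '' {y | (0 : ℝ) ≤ y}) - sSup (U 0 '' {y | (0 : ℝ) ≤ y})|
      ≤ α ^ m * sSup ((fun x => |q m x - p m x|) '' {x | 0 ≤ x}) * R := by
  set Δ := sSup ((fun x => |q m x - p m x|) '' {x | 0 ≤ x}) with hΔdef
  have hΔbdd : BddAbove ((fun x => |q m x - p m x|) '' {x | 0 ≤ x}) := by
    refine ⟨1, ?_⟩
    rintro a ⟨y, hy, rfl⟩
    have h1 := hp0 m y hy; have h2 := hp1 m y hy
    have h3 := hq0 m y hy; have h4 := hq1 m y hy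
    rw [abs_le]; constructor <;> linarith
  have hΔ : ∀ x, 0 ≤ x → |q m x - p m x| ≤ Δ := fun x hx =>
    le_csSup hΔbdd ⟨x, hx, rfl⟩
  have hΔ0 : 0 ≤ Δ := (abs_nonneg _).trans (hΔ 0 le_rfl)
  have key : ∀ d n, n + d = m → ∀ x, 0 ≤ x →
      ((∀ y, 0 ≤ y → p m y ≤ q m y) → U n x ≤ V n x) ∧
      ((∀ y, 0 ≤ y → q m y ≤ p m y) → V n x ≤ U n x) ∧
      |V n x - U n x| ≤ α ^ d * Δ * R := by
    intro d
    induction d with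
    | zero =>
      intro n hn x hx
      have hnm : n = m := by omega
      subst hnm
      have hSeq : sSup (V (n + 1) '' {y | x ≤ y})
          = sSup (U (n + 1) '' {y | x ≤ y}) := by
        congr 1
        apply Set.image_congr
        intro y hy
        exact (hUV (n + 1) (Nat.lt_succ_self n) y (hx.trans hy)).symm
      set S := sSup (U (n + 1) '' {y | x ≤ y}) with hSdef
      have hdiff : V n x - U n x = (q n x - p n x) * (R - α * (C x + S)) := by
        rw [hU n x hx, hV n x hx, hSeq]; ring
      obtain ⟨hb1, hb2⟩ := hbound x hx
      have hfac0 : 0 ≤ R - α * (C x + S) := by nlinarith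
      have hfacR : R - α * (C x + S) ≤ R := by nlinarith
      refine ⟨?_, ?_, ?_⟩
      · intro h
        have := mul_nonneg (sub_nonneg.mpr (h x hx)) hfac0
        linarith
      · intro h
        have := mul_nonneg (sub_nonneg.mpr (h x hx)) hfac0
        nlinarith [sub_nonneg.mpr (h x hx)]
      · rw [hdiff, abs_mul, pow_zero, one_mul, abs_of_nonneg hfac0]
        exact mul_le_mul (hΔ x hx) hfacR hfac0 hΔ0
    | succ d ih =>
      intro n hn x hx
      have hnm : n ≠ m := by omega
      have hVx := hV n x hx
      rw [hqp n hnm x hx] at hVx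
      have hdiff : V n x - U n x = α * (1 - p n x) *
          (sSup (V (n + 1) '' {y | x ≤ y}) - sSup (U (n + 1) '' {y | x ≤ y})) := by
        rw [hU n x hx, hVx]; ring
      have hcoef0 : 0 ≤ α * (1 - p n x) :=
        mul_nonneg hα0.le (by linarith [hp1 n x hx])
      have hcoefα : α * (1 - p n x) ≤ α := by nlinarith [hp0 n x hx]
      have ih' := fun y (hy : x ≤ y) => ih (n + 1) (by omega) y (hx.trans hy)
      refine ⟨?_, ?_, ?_⟩
      · intro h
        have hsup : sSup (U (n + 1) '' {y | x ≤ y})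
            ≤ sSup (V (n + 1) '' {y | x ≤ y}) :=
          sup_mono_pt (fun y hy => (ih' y hy).1 h) (hVbdd (n + 1) x hx)
        nlinarith
      · intro h
        have hsup : sSup (V (n + 1) '' {y | x ≤ y})
            ≤ sSup (U (n + 1) '' {y | x ≤ y}) :=
          sup_mono_pt (fun y hy => (ih' y hy).2.1 h) (hUbdd (n + 1) x hx)
        nlinarith
      · have hsup : |sSup (V (n + 1) '' {y | x ≤ y})
            - sSup (U (n + 1) '' {y | x ≤ y})| ≤ α ^ d * Δ * R :=
          sup_abs_diff (fun y hy => (ih' y hy).2.2)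
            (hVbdd (n + 1) x hx) (hUbdd (n + 1) x hx)
        rw [hdiff, abs_mul, abs_of_nonneg hcoef0]
        calc α * (1 - p n x) * |sSup (V (n + 1) '' {y | x ≤ y})
              - sSup (U (n + 1) '' {y | x ≤ y})|
            ≤ α * (α ^ d * Δ * R) :=
              mul_le_mul hcoefα hsup (abs_nonneg _) hα0.le
          _ = α ^ (d + 1) * Δ * R := by ring
  have key0 := key m 0 (by omega)
  refine ⟨?_, ?_, ?_⟩
  · intro h
    exact sup_mono_pt (fun y hy => (key0 y hy).1 h) (hVbdd 0 0 le_rfl)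
  · intro h
    exact sup_mono_pt (fun y hy => (key0 y hy).2.1 h) (hUbdd 0 0 le_rfl)
  · exact sup_abs_diff (fun y hy => (key0 y hy).2.2)
      (hVbdd 0 0 le_rfl) (hUbdd 0 0 le_rfl)
end
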